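/- arXiv:2410.20405 — 7 statements merged into one kernel-verified Lean document; each statement's English description precedes it below -/
import Mathlib

section
/- Let M be a solvable, weakly regime-acyclic, causally sufficient SCM with regime indicator R, let r be a value of R, and let Z be a set of observables with R ∉ Z. Writing A_r for the union of the union-graph ancestors of R and the descriptive-graph (for regime r) ancestors of Z, we have P({η_i} | Z, R = r) = P({η_i : i ∈ A_r} | Z, R = r) × ∏_{j ∉ A_r} P(η_j); in particular for k ∉ A_r, P(η_k | Z, R = r) = P(η_k). -/
/-!
Under the product measure `P η = ∏ j, p j (η j)`, an event depending only on the coordinates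
in `A` is independent of every event depending only on the coordinates outside `A`: the map
`(η, η') ↦ (A.piecewise η η', A.piecewise η' η)`, which swaps the coordinates outside `A`, is
a measure-preserving involution of the product of two copies. Solvability of the SCM says exactly
that the conditioning event `{Z = z, R = r}` depends only on the noises indexed by `A_r`, so
conditioning on it leaves the noises outside `A_r` with their product law.
-/

open scoped Classical

noncomputable def pr {Ω : Type*} [Fintype Ω] (P : Ω → ℝ) (A : Set Ω) : ℝ :=
  ∑ ω, if ω ∈ A then P ω else 0

noncomputable def cpr {Ω : Type*} [Fintype Ω] (P : Ω → ℝ) (A B : Set Ω) : ℝ :=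
  pr P (A ∩ B) / pr P B

lemma pr_univ {Ω : Type*} [Fintype Ω] (P : Ω → ℝ) : pr P Set.univ = ∑ ω, P ω := by
  simp [pr]

section ProductMeasure

variable {ι : Type*} [Fintype ι] {N : ι → Type*} (p : ∀ j, N j → ℝ)

lemma prod_piecewise_mul_prod_piecewise (A : Set ι) (η η' : ∀ j, N j) :
    (∏ j, p j (A.piecewise η η' j)) * ∏ j, p j (A.piecewise η' η j)
      = (∏ j, p j (η j)) * ∏ j, p j (η' j) := by
  simp only [← Finset.prod_mul_distrib]
  refine Finset.prod_congr rfl fun j _ => ?_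
  by_cases hj : j ∈ A <;> simp [Set.piecewise, hj, mul_comm]

variable [DecidableEq ι] [∀ j, Fintype (N j)]

lemma pr_pi_eq_prod_pr (T : ∀ j, Set (N j)) :
    pr (fun η => ∏ j, p j (η j)) {η : ∀ j, N j | ∀ j, η j ∈ T j}
      = ∏ j, pr (p j) (T j) := by
  simp only [pr, Set.mem_ofPred_eq, ← Fintype.prod_ite_zero]
  rw [Finset.prod_univ_sum, Fintype.piFinset_univ]

lemma sum_pi_prod_eq_one (hp : ∀ j, ∑ n, p j n = 1) :
    ∑ η : ∀ j, N j, ∏ j, p j (η j) = 1 := by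
  simpa [pr_univ, hp] using pr_pi_eq_prod_pr p fun _ => Set.univ

lemma pr_inter_eq_mul_of_dependsOn (hp : ∀ j, ∑ n, p j n = 1) {A : Set ι}
    {B C : Set (∀ j, N j)} (hB : DependsOn (· ∈ B) A) (hC : DependsOn (· ∈ C) Aᶜ) :
    pr (fun η => ∏ j, p j (η j)) (B ∩ C)
      = pr (fun η => ∏ j, p j (η j)) B * pr (fun η => ∏ j, p j (η j)) C := by
  set P : (∀ j, N j) → ℝ := fun η => ∏ j, p j (η j)
  have hP : ∑ η, P η = 1 := sum_pi_prod_eq_one p hp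
  let swap : (∀ j, N j) × (∀ j, N j) → (∀ j, N j) × (∀ j, N j) :=
    fun x => (A.piecewise x.1 x.2, A.piecewise x.2 x.1)
  have hswap : Function.Involutive swap := fun x => by
    ext j <;> by_cases hj : j ∈ A <;> simp [swap, Set.piecewise, hj]
  have hmemB (η η' : ∀ j, N j) : A.piecewise η η' ∈ B ↔ η ∈ B :=
    iff_of_eq (hB fun j hj => Set.piecewise_eq_of_mem _ _ _ hj)
  have hmemC (η η' : ∀ j, N j) : A.piecewise η' η ∈ C ↔ η ∈ C :=
    iff_of_eq (hC fun j hj => Set.piecewise_eq_of_notMem _ _ _ hj)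
  let f : (∀ j, N j) × (∀ j, N j) → ℝ :=
    fun x => (if x.1 ∈ B then P x.1 else 0) * if x.2 ∈ C then P x.2 else 0
  calc pr P (B ∩ C) = ∑ η, ∑ η', (if η ∈ B ∩ C then P η else 0) * P η' := by
        simp only [pr, ← Finset.mul_sum, hP, mul_one]
        congr!
    _ = ∑ x, f (swap x) := by
        rw [← Fintype.sum_prod_type']
        refine Finset.sum_congr rfl fun x _ => ?_
        simp only [f, swap, hmemB, hmemC, ite_zero_mul_ite_zero, P,
          prod_piecewise_mul_prod_piecewise, Set.mem_inter_iff]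
        rw [ite_mul, zero_mul]
    _ = ∑ x, f x := Equiv.sum_comp hswap.toPerm f
    _ = pr P B * pr P C := by rw [pr, pr, Finset.sum_mul_sum, ← Fintype.sum_prod_type']

variable {p}

lemma cpr_singleton_eq_of_dependsOn (hp : ∀ j, ∑ n, p j n = 1) {A : Set ι}
    {B : Set (∀ j, N j)} (hB : DependsOn (· ∈ B) A) (η₀ : ∀ j, N j) :
    cpr (fun η => ∏ j, p j (η j)) {η | η = η₀} B
      = cpr (fun η => ∏ j, p j (η j)) {η | ∀ j ∈ A, η j = η₀ j} B
        * ∏ j, if j ∈ A then (1 : ℝ) else p j (η₀ j) := by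
  have hsplit : {η | η = η₀} ∩ B
      = ({η | ∀ j ∈ A, η j = η₀ j} ∩ B)
          ∩ {η | ∀ j, η j ∈ {n | j ∉ A → n = η₀ j}} := by
    ext η
    simp only [Set.mem_inter_iff, Set.mem_ofPred_eq, funext_iff]
    constructor
    · rintro ⟨h, hηB⟩
      exact ⟨⟨fun j _ => h j, hηB⟩, fun j _ => h j⟩
    · rintro ⟨⟨hA, hηB⟩, hAc⟩
      exact ⟨fun j => if hj : j ∈ A then hA j hj else hAc j hj, hηB⟩
  have hdep : DependsOn (· ∈ {η | ∀ j ∈ A, η j = η₀ j} ∩ B) A := fun η η' h => by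
    simp only [Set.mem_inter_iff, Set.mem_ofPred_eq, eq_iff_iff]
    exact and_congr (forall₂_congr fun j hj => by rw [h j hj]) (iff_of_eq (hB h))
  have hbox (j : ι) :
      pr (p j) {n | j ∉ A → n = η₀ j} = if j ∈ A then 1 else p j (η₀ j) := by
    by_cases hj : j ∈ A <;> simp [pr, hj, hp]
  rw [cpr, cpr, hsplit, pr_inter_eq_mul_of_dependsOn p hp hdep, pr_pi_eq_prod_pr]
  · simp only [hbox, mul_div_right_comm]
  · intro η η' h
    simp only [Set.mem_ofPred_eq, eq_iff_iff]
    exact forall_congr' fun j => imp_congr_right fun hj => by rw [h j hj]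

lemma cpr_eval_eq_of_dependsOn (hp : ∀ j, ∑ n, p j n = 1) {A : Set ι} {B : Set (∀ j, N j)}
    (hB : DependsOn (· ∈ B) A) (hBpos : pr (fun η => ∏ j, p j (η j)) B ≠ 0)
    {k : ι} (hk : k ∉ A) (nk : N k) :
    cpr (fun η => ∏ j, p j (η j)) {η | η k = nk} B = p k nk := by
  let T : ∀ j, Set (N j) := Function.update (fun _ => Set.univ) k {nk}
  have hT : {η : ∀ j, N j | η k = nk} = {η | ∀ j, η j ∈ T j} := by
    ext η
    simp only [Set.mem_ofPred_eq]
    refine ⟨fun h j => ?_, fun h => by simpa [T] using h k⟩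
    rcases eq_or_ne j k with rfl | hj
    · simpa [T] using h
    · simp [T, hj]
  have hdep : DependsOn (· ∈ {η : ∀ j, N j | η k = nk}) Aᶜ := fun η η' h => by
    simp only [Set.mem_ofPred_eq, h k hk]
  have hmarg : ∏ j, pr (p j) (T j) = p k nk := by
    rw [Finset.prod_eq_single k (fun j _ hj => by simp [T, hj, pr_univ, hp]) (by simp)]
    simp [T, pr]
  rw [cpr, Set.inter_comm, pr_inter_eq_mul_of_dependsOn p hp hB hdep, hT, pr_pi_eq_prod_pr, hmarg,
    mul_div_cancel_left₀ _ hBpos]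

end ProductMeasure

theorem stmt_8_general {ι : Type*} [Fintype ι] [DecidableEq ι]
    (Val : ι → Type*) (Noise : ι → Type*) [∀ j, Fintype (Noise j)]
    (p : ∀ j, Noise j → ℝ)
    (hsump : ∀ j : ι, ∑ n, p j n = 1)
    (P : (∀ j, Noise j) → ℝ)
    (hP : ∀ η : ∀ j, Noise j, P η = ∏ j, p j (η j))  -- causal sufficiency
    (EU ED : ι → ι → Prop)  -- union graph and descriptive graph for regime r
    (R : ι) (r : Val R)
    (F : ∀ i : ι, (∀ j, Noise j) → Val i)  -- solution functions
    (Zs : Set ι) (z : ∀ i, Val i)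
    (Ar : Set ι)
    (hAr : Ar = {j : ι | Relation.ReflTransGen EU j R} ∪
                {j : ι | ∃ i ∈ Zs, Relation.ReflTransGen ED j i})
    (hdepR : ∀ η η' : ∀ j, Noise j,
      (∀ j, Relation.ReflTransGen EU j R → η j = η' j) → F R η = F R η')
    (hdepZ : ∀ i ∈ Zs, ∀ η η' : ∀ j, Noise j, F R η = r → F R η' = r →
      (∀ j ∈ Ar, η j = η' j) → F i η = F i η')
    (hposZ : pr P {η | F R η = r ∧ ∀ i ∈ Zs, F i η = z i} ≠ 0) :
    (∀ η₀ : ∀ j, Noise j,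
      cpr P {η | η = η₀} {η | F R η = r ∧ ∀ i ∈ Zs, F i η = z i}
        = cpr P {η | ∀ j ∈ Ar, η j = η₀ j} {η | F R η = r ∧ ∀ i ∈ Zs, F i η = z i}
          * ∏ j, if j ∈ Ar then (1 : ℝ) else p j (η₀ j)) ∧
    (∀ k : ι, k ∉ Ar → ∀ nk : Noise k,
      cpr P {η | η k = nk} {η | F R η = r ∧ ∀ i ∈ Zs, F i η = z i} = p k nk) := by
  obtain rfl : P = fun η => ∏ j, p j (η j) := funext hP
  have hancR (j : ι) (hj : Relation.ReflTransGen EU j R) : j ∈ Ar := hAr ▸ Or.inl hj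
  have hB : DependsOn (· ∈ {η | F R η = r ∧ ∀ i ∈ Zs, F i η = z i}) Ar := by
    intro η η' h
    have hR : F R η = F R η' := hdepR η η' fun j hj => h j (hancR j hj)
    simp only [Set.mem_ofPred_eq, eq_iff_iff, hR]
    exact and_congr_right fun hr =>
      forall₂_congr fun i hi => by rw [hdepZ i hi η η' (hR.trans hr) hr h]
  exact ⟨cpr_singleton_eq_of_dependsOn hsump hB,
    fun k hk => cpr_eval_eq_of_dependsOn hsump hB hposZ hk⟩

/-- regime-specific noise factorization. With `A_r` the union of the
union-graph ancestors of `R` and the descriptive-graph (regime `r`) ancestors of `Zs`,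
conditioning on `{Z = z, R = r}` (with `R ∉ Zs`) leaves the noises outside `A_r`
independent and unchanged: `P({η_i} | Z, R = r) = P({η_i : i ∈ A_r} | Z, R = r) ×
∏_{j ∉ A_r} P(η_j)`; in particular `P(η_k | Z, R = r) = P(η_k)` for `k ∉ A_r`. -/
theorem stmt_8 {ι : Type*} [Fintype ι] [DecidableEq ι]
    (Val : ι → Type*) (Noise : ι → Type*) [∀ j, Fintype (Noise j)]
    (p : ∀ j, Noise j → ℝ)
    (hpos : ∀ (j : ι) (n : Noise j), 0 ≤ p j n) (hsump : ∀ j : ι, ∑ n, p j n = 1)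
    (P : (∀ j, Noise j) → ℝ)
    (hP : ∀ η : ∀ j, Noise j, P η = ∏ j, p j (η j))  -- causal sufficiency
    (EU ED : ι → ι → Prop)  -- union graph and descriptive graph for regime r
    (R : ι) (r : Val R)
    (F : ∀ i : ι, (∀ j, Noise j) → Val i)  -- solution functions
    (Zs : Set ι) (hRZ : R ∉ Zs) (z : ∀ i, Val i)
    (Ar : Set ι)
    (hAr : Ar = {j : ι | Relation.ReflTransGen EU j R} ∪
                {j : ι | ∃ i ∈ Zs, Relation.ReflTransGen ED j i})
    (hdepR : ∀ η η' : ∀ j, Noise j,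
      (∀ j, Relation.ReflTransGen EU j R → η j = η' j) → F R η = F R η')
    (hdepZ : ∀ i ∈ Zs, ∀ η η' : ∀ j, Noise j, F R η = r → F R η' = r →
      (∀ j ∈ Ar, η j = η' j) → F i η = F i η')
    (hposZ : pr P {η | F R η = r ∧ ∀ i ∈ Zs, F i η = z i} ≠ 0) :
    (∀ η₀ : ∀ j, Noise j,
      cpr P {η | η = η₀} {η | F R η = r ∧ ∀ i ∈ Zs, F i η = z i}
        = cpr P {η | ∀ j ∈ Ar, η j = η₀ j} {η | F R η = r ∧ ∀ i ∈ Zs, F i η = z i}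
          * ∏ j, if j ∈ Ar then (1 : ℝ) else p j (η₀ j)) ∧
    (∀ k : ι, k ∉ Ar → ∀ nk : Noise k,
      cpr P {η | η k = nk} {η | F R η = r ∧ ∀ i ∈ Zs, F i η = z i} = p k nk) :=
  stmt_8_general Val Noise p hsump P hP EU ED R r F Zs z Ar hAr hdepR hdepZ hposZ
end

section
/- Local Markov property for barriers: in a causally sufficient solvable SCM, for any variable Y not contained in any directed cycle of the union graph, the set B = Pa_union(Y) satisfies Y ⫫ η_C | B for every set C of variables not containing Y, where η_C denotes the exogenous noises of the variables in C. -/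
/-!
Fix the parent values `B = b`. Given `B = b`, `Y = f_Y(b, η_Y)` is a function of `η_Y` alone, and
both the event `B = b` and any event on `η_C` (with `Y ∉ C`) are insensitive to `η_Y`, because
`Y` is not an ancestor of its own parents. Under the product law of the noises, an event
`{η_Y ∈ S} ∩ T` with `T` insensitive to `η_Y` has probability `P(η_Y ∈ S) · P(T)`; applied to
`T = {B = b}` and `T = {η_C = c} ∩ {B = b}`, this gives the conditional independence.
-/

open scoped Classical

section UpdateInvariant

variable {ι : Type*} [DecidableEq ι] {N : ι → Type*}

theorem apply_update_eq_of_forall_eq {α : Type*} {A : Set ι} (g : (∀ j, N j) → α)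
    (hg : ∀ η η' : ∀ j, N j, (∀ j ∈ A, η j = η' j) → g η = g η')
    {i : ι} (hi : i ∉ A) (η : ∀ j, N j) (n : N i) :
    g (Function.update η i n) = g η :=
  hg _ _ fun _ hj => Function.update_of_ne (ne_of_mem_of_not_mem hj hi) n η

variable [Fintype ι] [∀ j, Fintype (N j)]

/-- `(η, m) ↦ (η[i ↦ m], η i)` is an involution exchanging the `i`-th coordinate with the
extra one, so it swaps the roles of `u` and `v` below. -/
theorem sum_mul_sum_apply_mul_of_update_invariant {R : Type*} [CommSemiring R] (i : ι)
    (u v : N i → R) (h : (∀ j, N j) → R)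
    (hh : ∀ η n, h (Function.update η i n) = h η) :
    (∑ n, v n) * ∑ η, u (η i) * h η = (∑ n, u n) * ∑ η, v (η i) * h η := by
  have hswap : Function.Involutive fun x : (∀ j, N j) × N i =>
      (Function.update x.1 i x.2, x.1 i) := by
    rintro ⟨η, m⟩
    simp
  calc (∑ n, v n) * ∑ η, u (η i) * h η
      = ∑ x : (∀ j, N j) × N i, u (x.1 i) * v x.2 * h x.1 := by
        rw [Fintype.sum_prod_type, Finset.mul_sum]
        refine Finset.sum_congr rfl fun η _ => ?_
        rw [Finset.sum_mul]
        exact Finset.sum_congr rfl fun m _ => by ring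
    _ = ∑ x : (∀ j, N j) × N i, u x.2 * v (x.1 i) * h x.1 :=
        Fintype.sum_equiv hswap.toPerm _ _ fun ⟨η, m⟩ => by simp [hh]
    _ = (∑ n, u n) * ∑ η, v (η i) * h η := by
        rw [Fintype.sum_prod_type, Finset.mul_sum]
        refine Finset.sum_congr rfl fun η _ => ?_
        rw [Finset.sum_mul]
        exact Finset.sum_congr rfl fun m _ => by ring

theorem pr_prod_inter_eval_preimage (p : ∀ j, N j → ℝ) {i : ι} (hp : ∑ n, p i n = 1)
    (S : Set (N i)) {T : Set (∀ j, N j)}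
    (hT : ∀ η n, Function.update η i n ∈ T ↔ η ∈ T) :
    pr (fun η => ∏ j, p j (η j)) ({η | η i ∈ S} ∩ T)
      = (∑ n, if n ∈ S then p i n else 0) * pr (fun η => ∏ j, p j (η j)) T := by
  set rest : (∀ j, N j) → ℝ := fun η => if η ∈ T then ∏ j ∈ Finset.univ.erase i, p j (η j) else 0
  have hrest : ∀ η n, rest (Function.update η i n) = rest η := by
    intro η n
    simp only [rest, hT]
    congr 1
    exact Finset.prod_congr rfl fun j hj =>
      by rw [Function.update_of_ne (Finset.ne_of_mem_erase hj)]
  have hweight : ∀ η, (if η ∈ T then ∏ j, p j (η j) else 0) = p i (η i) * rest η := by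
    intro η
    rw [mul_ite, mul_zero, Finset.mul_prod_erase _ (fun j => p j (η j)) (Finset.mem_univ i)]
  have hswap := sum_mul_sum_apply_mul_of_update_invariant i
    (fun n => if n ∈ S then p i n else 0) (p i) rest hrest
  rw [hp, one_mul] at hswap
  calc pr (fun η => ∏ j, p j (η j)) ({η | η i ∈ S} ∩ T)
      = ∑ η, (if η i ∈ S then p i (η i) else 0) * rest η := by
        refine Finset.sum_congr rfl fun η _ => ?_
        by_cases hS : η i ∈ S <;> simp [rest, hS, hweight η]
    _ = _ := by simp only [hswap, pr, hweight]

end UpdateInvariant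

theorem stmt_9_general {ι : Type*} [Fintype ι] [DecidableEq ι]
    (Val : ι → Type*) (Noise : ι → Type*) [∀ j, Fintype (Noise j)]
    (p : ∀ j, Noise j → ℝ)
    (hsump : ∀ j : ι, ∑ n, p j n = 1)
    (P : (∀ j, Noise j) → ℝ)
    (hP : ∀ η : ∀ j, Noise j, P η = ∏ j, p j (η j))  -- causal sufficiency
    (Pa : ι → Set ι)  -- union-graph parent sets
    (f : ∀ i : ι, (∀ j, Val j) → Noise i → Val i)
    (F : ∀ i : ι, (∀ j, Noise j) → Val i)
    (hfix : ∀ (i : ι) (η : ∀ j, Noise j), F i η = f i (fun j => F j η) (η i))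
    (hpa : ∀ (i : ι) (v v' : ∀ j, Val j) (n : Noise i),
      (∀ j ∈ Pa i, v j = v' j) → f i v n = f i v' n)
    (hanc : ∀ (i : ι) (η η' : ∀ j, Noise j),  -- solvability: F i depends on ancestors
      (∀ j : ι, Relation.ReflTransGen (fun a b => a ∈ Pa b) j i → η j = η' j) →
      F i η = F i η')
    (Y : ι) (hnocyc : ¬ Relation.TransGen (fun a b => a ∈ Pa b) Y Y) :
    ∀ C : Set ι, Y ∉ C →
      ∀ (b : ∀ j, Val j) (y : Val Y) (c : ∀ j, Noise j),
        pr P {η | ∀ j ∈ Pa Y, F j η = b j} ≠ 0 →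
        cpr P ({η | F Y η = y} ∩ {η | ∀ j ∈ C, η j = c j}) {η | ∀ j ∈ Pa Y, F j η = b j}
          = cpr P {η | F Y η = y} {η | ∀ j ∈ Pa Y, F j η = b j}
            * cpr P {η | ∀ j ∈ C, η j = c j} {η | ∀ j ∈ Pa Y, F j η = b j} := by
  intro C hYC b y c hE
  obtain rfl : P = fun η => ∏ j, p j (η j) := funext hP
  set E := {η : ∀ j, Noise j | ∀ j ∈ Pa Y, F j η = b j}
  set D := {η : ∀ j, Noise j | ∀ j ∈ C, η j = c j}
  have hE_inv : ∀ η n, Function.update η Y n ∈ E ↔ η ∈ E := fun η n => by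
    have hPa : ∀ j ∈ Pa Y, F j (Function.update η Y n) = F j η := fun j hj =>
      apply_update_eq_of_forall_eq (F j) (hanc j) (fun hY => hnocyc (.tail' hY hj)) η n
    simp +contextual only [E, Set.mem_ofPred_eq, hPa]
  have hD_inv : ∀ η n, Function.update η Y n ∈ D ↔ η ∈ D := fun η n => by
    rw [apply_update_eq_of_forall_eq (· ∈ D) (fun η η' h => by simp +contextual [D, h]) hYC]
  have hY_on_E : ∀ A ⊆ E, {η | F Y η = y} ∩ A = {η | η Y ∈ {n | f Y b n = y}} ∩ A := by
    intro A hA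
    ext η
    simp only [Set.mem_inter_iff, Set.mem_ofPred_eq, and_congr_left_iff]
    exact fun hη => by rw [hfix, hpa Y _ b _ (hA hη)]
  have hfactor := fun A => pr_prod_inter_eval_preimage (T := A) p (hsump Y) {n | f Y b n = y}
  simp only [cpr, Set.inter_assoc, hY_on_E _ Set.inter_subset_right,
    hY_on_E E subset_rfl, hfactor E hE_inv, hfactor (D ∩ E) (by simp [hD_inv, hE_inv])]
  field_simp

/-- local Markov property for barriers. In a causally sufficient
(independent noises), solvable SCM, for any variable `Y` not contained in any directed
cycle of the union graph, the set `B = Pa_union(Y)` is a barrier: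
`Y ⫫ η_C | B` for every set `C` of variables with `Y ∉ C`. -/
theorem stmt_9 {ι : Type*} [Fintype ι] [DecidableEq ι]
    (Val : ι → Type*) (Noise : ι → Type*) [∀ j, Fintype (Noise j)]
    (p : ∀ j, Noise j → ℝ)
    (hpos : ∀ (j : ι) (n : Noise j), 0 ≤ p j n) (hsump : ∀ j : ι, ∑ n, p j n = 1)
    (P : (∀ j, Noise j) → ℝ)
    (hP : ∀ η : ∀ j, Noise j, P η = ∏ j, p j (η j))  -- causal sufficiency
    (Pa : ι → Set ι)  -- union-graph parent sets
    (f : ∀ i : ι, (∀ j, Val j) → Noise i → Val i)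
    (F : ∀ i : ι, (∀ j, Noise j) → Val i)
    (hfix : ∀ (i : ι) (η : ∀ j, Noise j), F i η = f i (fun j => F j η) (η i))
    (hpa : ∀ (i : ι) (v v' : ∀ j, Val j) (n : Noise i),
      (∀ j ∈ Pa i, v j = v' j) → f i v n = f i v' n)
    (hanc : ∀ (i : ι) (η η' : ∀ j, Noise j),  -- solvability: F i depends on ancestors
      (∀ j : ι, Relation.ReflTransGen (fun a b => a ∈ Pa b) j i → η j = η' j) →
      F i η = F i η')
    (Y : ι) (hnocyc : ¬ Relation.TransGen (fun a b => a ∈ Pa b) Y Y) :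
    ∀ C : Set ι, Y ∉ C →
      ∀ (b : ∀ j, Val j) (y : Val Y) (c : ∀ j, Noise j),
        pr P {η | ∀ j ∈ Pa Y, F j η = b j} ≠ 0 →
        cpr P ({η | F Y η = y} ∩ {η | ∀ j ∈ C, η j = c j}) {η | ∀ j ∈ Pa Y, F j η = b j}
          = cpr P {η | F Y η = y} {η | ∀ j ∈ Pa Y, F j η = b j}
            * cpr P {η | ∀ j ∈ C, η j = c j} {η | ∀ j ∈ Pa Y, F j η = b j} :=
  stmt_9_general Val Noise p hsump P hP Pa f F hfix hpa hanc Y hnocyc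
end

section
/- Regime-specific local Markov property: in a causally sufficient, solvable, weakly regime-acyclic SCM with regime indicator R and regime value r, for any variable Y with Y ≠ R, Y not on a directed cycle of the descriptive graph G_descr(r), and Y not a union-graph ancestor of R, the set B = Pa_descr(r)(Y) ∪ {R} is an r-barrier: Y ⫫ η_C | B − {R}, R = r for every set C of variables not containing Y. -/
/-!
Conditioning on `R = r` and on the values `b` of the descriptive parents of `Y` is an event that
ignores the noise coordinate `η_Y`: `Y` is not a union-graph ancestor of `R`, and since `Y` lies on
no directed cycle of `G_descr(r)` it is not a descriptive ancestor of its own parents, which in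
regime `r` depend only on their descriptive ancestors. The event `η_C = c` ignores `η_Y` as well,
because `Y ∉ C`. On the conditioning event `Y = g(b, η_Y)` is an event about `η_Y` alone, and under
a product measure such an event is independent of every event that ignores `η_Y`.
-/
open scoped Classical

open Function Relation

section CoordInvariant

variable {ι : Type*} [DecidableEq ι] {Noise : ι → Type*}

def CoordInvariant (Y : ι) (W : Set (∀ j, Noise j)) : Prop :=
  ∀ η n, η ∈ W → update η Y n ∈ W

theorem CoordInvariant.inter {Y : ι} {W W' : Set (∀ j, Noise j)} (hW : CoordInvariant Y W)
    (hW' : CoordInvariant Y W') : CoordInvariant Y (W ∩ W') :=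
  fun η n h => ⟨hW η n h.1, hW' η n h.2⟩

theorem CoordInvariant.update_mem_iff {Y : ι} {W : Set (∀ j, Noise j)}
    (hW : CoordInvariant Y W) (η : ∀ j, Noise j) (n : Noise Y) :
    update η Y n ∈ W ↔ η ∈ W := by
  refine ⟨fun h => ?_, hW η n⟩
  simpa only [update_idem, update_eq_self] using hW _ (η Y) h

theorem mul_prod_update [Fintype ι] (p : ∀ j, Noise j → ℝ) (η : ∀ j, Noise j) (Y : ι)
    (n : Noise Y) :
    p Y (η Y) * ∏ j, p j (update η Y n j) = p Y n * ∏ j, p j (η j) := by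
  simp only [apply_update (fun j => p j), Finset.prod_update_of_mem (Finset.mem_univ Y),
    Fintype.prod_eq_mul_prod_compl Y (fun j => p j (η j)), Finset.compl_eq_univ_sdiff]
  ring

/-- The swap `(η, n) ↦ (η Y, update η Y n)` exchanges the `Y`-coordinate of `η` with an
independent copy `n`; it preserves the product weight and the events that ignore coordinate `Y`. -/
theorem pr_coord_inter_mul [Fintype ι] [∀ j, Fintype (Noise j)] (p : ∀ j, Noise j → ℝ) (Y : ι)
    (T : Set (Noise Y)) {W : Set (∀ j, Noise j)} (hW : CoordInvariant Y W) :
    pr (fun η => ∏ j, p j (η j)) ({η | η Y ∈ T} ∩ W) * pr (p Y) Set.univ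
      = pr (p Y) T * pr (fun η => ∏ j, p j (η j)) W := by
  let swap : (∀ j, Noise j) × Noise Y ≃ Noise Y × (∀ j, Noise j) :=
    { toFun := fun q => (q.1 Y, update q.1 Y q.2)
      invFun := fun q => (update q.2 Y q.1, q.2 Y)
      left_inv := fun q => by simp
      right_inv := fun q => by simp }
  simp only [pr, Fintype.sum_mul_sum, ← Fintype.sum_prod_type']
  refine Fintype.sum_equiv swap _ _ fun q => ?_
  by_cases hT : q.1 Y ∈ T <;> by_cases hq : q.1 ∈ W <;>
    simp [swap, hT, hq, hW.update_mem_iff, mul_prod_update, mul_comm]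

theorem update_apply_eq_of_not_reflTransGen {rel : ι → ι → Prop} {Y i : ι}
    (h : ¬ ReflTransGen rel Y i) (η : ∀ j, Noise j) (n : Noise Y) {j : ι}
    (hj : ReflTransGen rel j i) : update η Y n j = η j :=
  update_of_ne (by rintro rfl; exact h hj) _ _

end CoordInvariant

theorem cpr_congr_of_mem_iff {Ω : Type*} [Fintype Ω] {P : Ω → ℝ} {A A' S : Set Ω}
    (h : ∀ ω ∈ S, ω ∈ A ↔ ω ∈ A') :
    cpr P A S = cpr P A' S := by
  unfold cpr
  congr 2
  ext ω
  simp only [Set.mem_inter_iff]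
  exact ⟨fun ⟨hA, hS⟩ => ⟨(h ω hS).1 hA, hS⟩, fun ⟨hA, hS⟩ => ⟨(h ω hS).2 hA, hS⟩⟩

theorem cpr_coord_inter_eq_mul {ι : Type*} [Fintype ι] [DecidableEq ι] {Noise : ι → Type*}
    [∀ j, Fintype (Noise j)] (p : ∀ j, Noise j → ℝ) {Y : ι} (hY : ∑ n, p Y n = 1)
    (T : Set (Noise Y)) {E S : Set (∀ j, Noise j)} (hE : CoordInvariant Y E)
    (hS : CoordInvariant Y S) (hS0 : pr (fun η => ∏ j, p j (η j)) S ≠ 0) :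
    cpr (fun η => ∏ j, p j (η j)) ({η | η Y ∈ T} ∩ E) S
      = cpr (fun η => ∏ j, p j (η j)) {η | η Y ∈ T} S
        * cpr (fun η => ∏ j, p j (η j)) E S := by
  have hunit : pr (p Y) Set.univ = 1 := by simpa [pr] using hY
  have key : ∀ {W}, CoordInvariant Y W →
      pr (fun η => ∏ j, p j (η j)) ({η | η Y ∈ T} ∩ W)
        = pr (p Y) T * pr (fun η => ∏ j, p j (η j)) W := fun hW => by
    simpa [hunit] using pr_coord_inter_mul p Y T hW
  unfold cpr
  rw [Set.inter_assoc, key (hE.inter hS), key hS]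
  field_simp

theorem stmt_10_general {ι : Type*} [Fintype ι] [DecidableEq ι]
    (Val : ι → Type*) (Noise : ι → Type*) [∀ j, Fintype (Noise j)]
    (p : ∀ j, Noise j → ℝ)
    (hsump : ∀ j : ι, ∑ n, p j n = 1)
    (P : (∀ j, Noise j) → ℝ)
    (hP : ∀ η : ∀ j, Noise j, P η = ∏ j, p j (η j))  -- causal sufficiency
    (PaU PaD : ι → Set ι)  -- union parents, descriptive parents for regime r
    (R : ι) (r : Val R)
    (F : ∀ i : ι, (∀ j, Noise j) → Val i)
    (hancU : ∀ (i : ι) (η η' : ∀ j, Noise j),  -- solvability (union graph)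
      (∀ j : ι, Relation.ReflTransGen (fun a b => a ∈ PaU b) j i → η j = η' j) →
      F i η = F i η')
    (hancD : ∀ (i : ι) (η η' : ∀ j, Noise j),  -- weak regime-acyclicity (regime r)
      F R η = r → F R η' = r →
      (∀ j : ι, Relation.ReflTransGen (fun a b => a ∈ PaD b) j i → η j = η' j) →
      F i η = F i η')
    (Y : ι)
    -- conditionally on R = r, Y a.s. equals a mechanism of its descriptive parents and η_Y
    (g : (∀ j, Val j) → Noise Y → Val Y)
    (hgdep : ∀ (v v' : ∀ j, Val j) (n : Noise Y), (∀ j ∈ PaD Y, v j = v' j) → g v n = g v' n)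
    (hgfix : ∀ η : ∀ j, Noise j, F R η = r → F Y η = g (fun j => F j η) (η Y))
    (hnocyc : ¬ Relation.TransGen (fun a b => a ∈ PaD b) Y Y)
    (hnotanc : ¬ Relation.ReflTransGen (fun a b => a ∈ PaU b) Y R) :
    ∀ C : Set ι, Y ∉ C →
      ∀ (b : ∀ j, Val j) (y : Val Y) (c : ∀ j, Noise j),
        pr P {η | F R η = r ∧ ∀ j ∈ PaD Y, F j η = b j} ≠ 0 →
        cpr P ({η | F Y η = y} ∩ {η | ∀ j ∈ C, η j = c j})
            {η | F R η = r ∧ ∀ j ∈ PaD Y, F j η = b j}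
          = cpr P {η | F Y η = y} {η | F R η = r ∧ ∀ j ∈ PaD Y, F j η = b j}
            * cpr P {η | ∀ j ∈ C, η j = c j} {η | F R η = r ∧ ∀ j ∈ PaD Y, F j η = b j} := by
  intro C hYC b y c hS0
  obtain rfl : P = fun η => ∏ j, p j (η j) := funext hP
  have hS : CoordInvariant Y {η | F R η = r ∧ ∀ j ∈ PaD Y, F j η = b j} := by
    rintro η n ⟨hR, hb⟩
    have hR' : F R (update η Y n) = r :=
      (hancU R _ _ fun _ => update_apply_eq_of_not_reflTransGen hnotanc η n).trans hR
    refine ⟨hR', fun j hj => ?_⟩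
    have hYj : ¬ ReflTransGen (fun a b => a ∈ PaD b) Y j := fun h => hnocyc (TransGen.tail' h hj)
    rw [hancD j _ _ hR' hR fun _ => update_apply_eq_of_not_reflTransGen hYj η n]
    exact hb j hj
  have hE : CoordInvariant Y {η | ∀ j ∈ C, η j = c j} := fun η n hη j hj => by
    rw [update_of_ne (ne_of_mem_of_not_mem hj hYC)]
    exact hη j hj
  have hFY : ∀ η ∈ {η | F R η = r ∧ ∀ j ∈ PaD Y, F j η = b j},
      F Y η = y ↔ g b (η Y) = y := by
    rintro η ⟨hR, hb⟩
    rw [hgfix η hR, hgdep _ _ _ hb]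
  convert cpr_coord_inter_eq_mul p (hsump Y) {n | g b n = y} hE hS hS0 using 1
  · exact cpr_congr_of_mem_iff fun η hη => and_congr_left' (hFY η hη)
  · congr 1
    exact cpr_congr_of_mem_iff hFY

/-- regime-specific local Markov property. In a causally sufficient,
solvable, weakly regime-acyclic SCM, for `Y ≠ R` not on a directed cycle of the
descriptive graph `G_descr(r)` and not a union-graph ancestor of `R`, the set
`B = Pa_descr(r)(Y) ∪ {R}` is an `r`-barrier: `Y ⫫ η_C | B − {R}, R = r` for every
set `C` of variables with `Y ∉ C`. -/
theorem stmt_10 {ι : Type*} [Fintype ι] [DecidableEq ι]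
    (Val : ι → Type*) (Noise : ι → Type*) [∀ j, Fintype (Noise j)]
    (p : ∀ j, Noise j → ℝ)
    (hpos : ∀ (j : ι) (n : Noise j), 0 ≤ p j n) (hsump : ∀ j : ι, ∑ n, p j n = 1)
    (P : (∀ j, Noise j) → ℝ)
    (hP : ∀ η : ∀ j, Noise j, P η = ∏ j, p j (η j))  -- causal sufficiency
    (PaU PaD : ι → Set ι)  -- union parents, descriptive parents for regime r
    (R : ι) (r : Val R)
    (F : ∀ i : ι, (∀ j, Noise j) → Val i)
    (hancU : ∀ (i : ι) (η η' : ∀ j, Noise j),  -- solvability (union graph)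
      (∀ j : ι, Relation.ReflTransGen (fun a b => a ∈ PaU b) j i → η j = η' j) →
      F i η = F i η')
    (hancD : ∀ (i : ι) (η η' : ∀ j, Noise j),  -- weak regime-acyclicity (regime r)
      F R η = r → F R η' = r →
      (∀ j : ι, Relation.ReflTransGen (fun a b => a ∈ PaD b) j i → η j = η' j) →
      F i η = F i η')
    (Y : ι) (hYR : Y ≠ R)
    -- conditionally on R = r, Y a.s. equals a mechanism of its descriptive parents and η_Y
    (g : (∀ j, Val j) → Noise Y → Val Y)
    (hgdep : ∀ (v v' : ∀ j, Val j) (n : Noise Y), (∀ j ∈ PaD Y, v j = v' j) → g v n = g v' n)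
    (hgfix : ∀ η : ∀ j, Noise j, F R η = r → F Y η = g (fun j => F j η) (η Y))
    (hnocyc : ¬ Relation.TransGen (fun a b => a ∈ PaD b) Y Y)
    (hnotanc : ¬ Relation.ReflTransGen (fun a b => a ∈ PaU b) Y R) :
    ∀ C : Set ι, Y ∉ C →
      ∀ (b : ∀ j, Val j) (y : Val Y) (c : ∀ j, Noise j),
        pr P {η | F R η = r ∧ ∀ j ∈ PaD Y, F j η = b j} ≠ 0 →
        cpr P ({η | F Y η = y} ∩ {η | ∀ j ∈ C, η j = c j})
            {η | F R η = r ∧ ∀ j ∈ PaD Y, F j η = b j}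
          = cpr P {η | F Y η = y} {η | F R η = r ∧ ∀ j ∈ PaD Y, F j η = b j}
            * cpr P {η | ∀ j ∈ C, η j = c j} {η | F R η = r ∧ ∀ j ∈ PaD Y, F j η = b j} :=
  stmt_10_general Val Noise p hsump P hP PaU PaD R r F hancU hancD Y g hgdep hgfix hnocyc hnotanc
end

section
/- Separation implies independence (barrier version): in a solvable weakly regime-acyclic SCM, if B is a set of variables disjoint from sets X and Y such that Y ⫫ η_{Anc_union(X)} | B, then X ⫫ Y | B. -/
open scoped Classical

/-- separation implies independence (barrier version). In a solvable
weakly regime-acyclic SCM (each solution function depends only on noises of its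
union-graph ancestors), if `B` is disjoint from `X` and `Y` and
`Y ⫫ η_{Anc_union(X)} | B`, then `X ⫫ Y | B`. -/
theorem stmt_11 {ι : Type*} [Fintype ι] [DecidableEq ι]
    (Val : ι → Type*) (Noise : ι → Type*) [∀ j, Fintype (Noise j)]
    (P : (∀ j, Noise j) → ℝ)
    (hpos : ∀ η, 0 ≤ P η) (hsum : ∑ η, P η = 1)
    (E : ι → ι → Prop)  -- union graph
    (F : ∀ i : ι, (∀ j, Noise j) → Val i)
    (hanc : ∀ (i : ι) (η η' : ∀ j, Noise j),  -- solution-function property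
      (∀ j : ι, Relation.ReflTransGen E j i → η j = η' j) → F i η = F i η')
    (Xs Ys Bs : Set ι)
    (hBX : Bs ∩ Xs = ∅) (hBY : Bs ∩ Ys = ∅)
    (hbarrier : ∀ (b : ∀ j, Val j) (yv : ∀ j, Val j) (c : ∀ j, Noise j),
      pr P {η | ∀ j ∈ Bs, F j η = b j} ≠ 0 →
      cpr P ({η | ∀ i ∈ Ys, F i η = yv i} ∩
             {η | ∀ j : ι, (∃ x ∈ Xs, Relation.ReflTransGen E j x) → η j = c j})
          {η | ∀ j ∈ Bs, F j η = b j}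
        = cpr P {η | ∀ i ∈ Ys, F i η = yv i} {η | ∀ j ∈ Bs, F j η = b j}
          * cpr P {η | ∀ j : ι, (∃ x ∈ Xs, Relation.ReflTransGen E j x) → η j = c j}
              {η | ∀ j ∈ Bs, F j η = b j}) :
    ∀ (b : ∀ j, Val j) (xv yv : ∀ j, Val j),
      pr P {η | ∀ j ∈ Bs, F j η = b j} ≠ 0 →
      cpr P ({η | ∀ i ∈ Xs, F i η = xv i} ∩ {η | ∀ i ∈ Ys, F i η = yv i})
          {η | ∀ j ∈ Bs, F j η = b j}
        = cpr P {η | ∀ i ∈ Xs, F i η = xv i} {η | ∀ j ∈ Bs, F j η = b j}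
          * cpr P {η | ∀ i ∈ Ys, F i η = yv i} {η | ∀ j ∈ Bs, F j η = b j} := by
  intro b xv yv hne
  set EB : Set (∀ j, Noise j) := {η | ∀ j ∈ Bs, F j η = b j} with hEB
  set EX : Set (∀ j, Noise j) := {η | ∀ i ∈ Xs, F i η = xv i} with hEXdef
  set EY : Set (∀ j, Noise j) := {η | ∀ i ∈ Ys, F i η = yv i} with hEYdef
  have hΩ : Nonempty (∀ j, Noise j) := by
    by_contra h
    rw [not_nonempty_iff] at h
    exact hne (by simp [pr])
  obtain ⟨η₀⟩ := hΩ
  set A : Set ι := {j | ∃ x ∈ Xs, Relation.ReflTransGen E j x} with hA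
  let ec : (∀ j : ↥A, Noise j) → (∀ j, Noise j) :=
    fun a j => if h : j ∈ A then a ⟨j, h⟩ else η₀ j
  set S : (∀ j : ↥A, Noise j) → Set (∀ j, Noise j) :=
    fun a => {η | ∀ j : ι, (∃ x ∈ Xs, Relation.ReflTransGen E j x) → η j = ec a j} with hSdef
  have hS : ∀ (ω : ∀ j, Noise j) (a), ω ∈ S a ↔ a = fun j : ↥A => ω j := by
    intro ω a
    constructor
    · intro h
      funext j
      have := h j.1 j.2
      simp only [ec, dif_pos j.2] at this
      exact this.symm
    · intro h j hj
      subst h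
      have hjA : j ∈ A := hj
      simp only [ec]
      rw [dif_pos hjA]
  have hpart : ∀ T : Set (∀ j, Noise j),
      pr P T = ∑ a : ∀ j : ↥A, Noise j, pr P (T ∩ S a) := by
    intro T
    simp only [pr]
    rw [Finset.sum_comm]
    refine Finset.sum_congr rfl fun ω _ => ?_
    by_cases ht : ω ∈ T
    · rw [if_pos ht]
      have hmem : ∀ a : ∀ j : ↥A, Noise j, (ω ∈ T ∩ S a) ↔ a = (fun j : ↥A => ω j) :=
        fun a => ⟨fun h => (hS ω a).1 h.2, fun h => ⟨ht, (hS ω a).2 h⟩⟩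
      symm
      calc (∑ a : ∀ j : ↥A, Noise j,
              @ite ℝ (ω ∈ T ∩ S a) (Classical.propDecidable _) (P ω) 0)
          = ∑ a : ∀ j : ↥A, Noise j, if a = (fun j : ↥A => ω j) then P ω else 0 :=
            Finset.sum_congr rfl fun a _ =>
              @if_congr ℝ _ _ (Classical.propDecidable _) _
                _ _ _ _ (hmem a) rfl rfl
        _ = P ω := by
            rw [Fintype.sum_eq_single (fun j : ↥A => ω j) (fun a ha => if_neg ha), if_pos rfl]
    · rw [if_neg ht]
      symm
      exact Finset.sum_eq_zero fun a _ => if_neg fun hc => ht hc.1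
  have hF : ∀ a (η : ∀ j, Noise j), η ∈ S a → ∀ i ∈ Xs, F i η = F i (ec a) := by
    intro a η hη i hi
    exact hanc i η (ec a) fun j hj => hη j ⟨i, hi, hj⟩
  set good : (∀ j : ↥A, Noise j) → Prop := fun a => ∀ i ∈ Xs, F i (ec a) = xv i with hgood
  have h1 : ∀ (T : Set (∀ j, Noise j)) a,
      pr P ((EX ∩ T) ∩ S a) = if good a then pr P (T ∩ S a) else 0 := by
    intro T a
    by_cases hg : good a
    · rw [if_pos hg]
      congr 1
      ext η
      constructor
      · rintro ⟨⟨_, ht⟩, hs⟩; exact ⟨ht, hs⟩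
      · rintro ⟨ht, hs⟩
        exact ⟨⟨fun i hi => (hF a η hs i hi).trans (hg i hi), ht⟩, hs⟩
    · rw [if_neg hg]
      have hempty : (EX ∩ T) ∩ S a = ∅ := by
        ext η
        simp only [Set.mem_empty_iff_false, iff_false]
        rintro ⟨⟨hx, _⟩, hs⟩
        exact hg fun i hi => (hF a η hs i hi).symm.trans (hx i hi)
      rw [hempty]
      simp [pr]
  have key1 : pr P ((EX ∩ EY) ∩ EB)
      = ∑ a : ∀ j : ↥A, Noise j, if good a then pr P ((EY ∩ S a) ∩ EB) else 0 := by
    have hassoc : (EX ∩ EY) ∩ EB = EX ∩ (EY ∩ EB) := by rw [Set.inter_assoc]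
    rw [hassoc, hpart]
    refine Finset.sum_congr rfl fun a _ => ?_
    rw [h1]
    by_cases hg : good a
    · rw [if_pos hg, if_pos hg]
      congr 1
      ext η
      constructor
      · rintro ⟨⟨hy, hb⟩, hs⟩; exact ⟨⟨hy, hs⟩, hb⟩
      · rintro ⟨⟨hy, hs⟩, hb⟩; exact ⟨⟨hy, hb⟩, hs⟩
    · rw [if_neg hg, if_neg hg]
  have key2 : pr P (EX ∩ EB)
      = ∑ a : ∀ j : ↥A, Noise j, if good a then pr P (S a ∩ EB) else 0 := by
    rw [hpart]
    refine Finset.sum_congr rfl fun a _ => ?_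
    rw [h1]
    by_cases hg : good a
    · rw [if_pos hg, if_pos hg]
      congr 1
      ext η
      constructor
      · rintro ⟨hb, hs⟩; exact ⟨hs, hb⟩
      · rintro ⟨hs, hb⟩; exact ⟨hb, hs⟩
    · rw [if_neg hg, if_neg hg]
  have step1 : cpr P (EX ∩ EY) EB
      = ∑ a : ∀ j : ↥A, Noise j, if good a then cpr P (EY ∩ S a) EB else 0 := by
    simp only [cpr]
    rw [key1, Finset.sum_div]
    refine Finset.sum_congr rfl fun a _ => ?_
    by_cases hg : good a
    · rw [if_pos hg, if_pos hg]
    · rw [if_neg hg, if_neg hg, zero_div]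
  have step2 : ∀ a : ∀ j : ↥A, Noise j, cpr P (EY ∩ S a) EB = cpr P EY EB * cpr P (S a) EB :=
    fun a => hbarrier b yv (ec a) hne
  have step3 : (∑ a : ∀ j : ↥A, Noise j, if good a then cpr P (S a) EB else 0)
      = cpr P EX EB := by
    simp only [cpr]
    rw [key2, Finset.sum_div]
    refine Finset.sum_congr rfl fun a _ => ?_
    by_cases hg : good a
    · rw [if_pos hg, if_pos hg]
    · rw [if_neg hg, if_neg hg, zero_div]
  calc cpr P (EX ∩ EY) EB
      = ∑ a : ∀ j : ↥A, Noise j, if good a then cpr P (EY ∩ S a) EB else 0 := step1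
    _ = ∑ a : ∀ j : ↥A, Noise j, if good a then cpr P EY EB * cpr P (S a) EB else 0 := by
        refine Finset.sum_congr rfl fun a _ => ?_
        rw [step2]
    _ = cpr P EY EB * ∑ a : ∀ j : ↥A, Noise j, if good a then cpr P (S a) EB else 0 := by
        rw [Finset.mul_sum]
        refine Finset.sum_congr rfl fun a _ => ?_
        by_cases hg : good a
        · rw [if_pos hg, if_pos hg]
        · rw [if_neg hg, if_neg hg, mul_zero]
    _ = cpr P EY EB * cpr P EX EB := by rw [step3]
    _ = cpr P EX EB * cpr P EY EB := mul_comm _ _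
end

section
/- Regime-specific separation implies independence: in a solvable weakly regime-acyclic SCM with regime indicator R and value r, if B with R ∈ B is disjoint from X and Y and satisfies Y ⫫ η_{Anc_descr(r)(X)} | B − {R}, R = r, then X ⫫ Y | B − {R}, R = r. -/
open scoped Classical

lemma pr_congr {Ω : Type*} [Fintype Ω] (P : Ω → ℝ) {S T : Set Ω}
    (h : ∀ ω, ω ∈ S ↔ ω ∈ T) : pr P S = pr P T := by
  rw [Set.ext h]

lemma pr_of_empty {Ω : Type*} [Fintype Ω] (P : Ω → ℝ) {S : Set Ω}
    (h : ∀ ω, ω ∉ S) : pr P S = 0 := by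
  unfold pr; simp [h]

lemma pr_partition {Ω : Type*} [Fintype Ω] (P : Ω → ℝ) {γ : Type*} [Fintype γ]
    (E : γ → Set Ω) (h : ∀ ω, ∃! c, ω ∈ E c) (S : Set Ω) :
    pr P S = ∑ c, pr P (S ∩ E c) := by
  unfold pr
  rw [Finset.sum_comm]
  refine Finset.sum_congr rfl fun ω _ => ?_
  by_cases hS : ω ∈ S
  · obtain ⟨c0, hc0, huniq⟩ := h ω
    rw [Finset.sum_eq_single c0]
    · simp [hS, hc0, Set.mem_inter_iff]
    · intro c _ hne
      have hnc : ω ∉ E c := fun h' => hne (huniq c h')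
      simp [Set.mem_inter_iff, hnc]
    · simp
  · simp [Set.mem_inter_iff, hS]

/-- regime-specific separation implies independence. On the event
`{R = r}`, `X` equals the restricted solution function of the noises of its
descriptive-graph ancestors; hence if `B ∋ R` is disjoint from `X` and `Y` and
`Y ⫫ η_{Anc_descr(r)(X)} | B − {R}, R = r`, then `X ⫫ Y | B − {R}, R = r`. -/
theorem stmt_12 {ι : Type*} [Fintype ι] [DecidableEq ι]
    (Val : ι → Type*) (Noise : ι → Type*) [∀ j, Fintype (Noise j)]
    (P : (∀ j, Noise j) → ℝ)
    (hpos : ∀ η, 0 ≤ P η) (hsum : ∑ η, P η = 1)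
    (ED : ι → ι → Prop)  -- descriptive graph for regime r
    (R : ι) (r : Val R)
    (F : ∀ i : ι, (∀ j, Noise j) → Val i)
    (hancD : ∀ (i : ι) (η η' : ∀ j, Noise j),  -- restricted solution-function property
      F R η = r → F R η' = r →
      (∀ j : ι, Relation.ReflTransGen ED j i → η j = η' j) → F i η = F i η')
    (Xs Ys Bs : Set ι) (hRB : R ∈ Bs)
    (hBX : Bs ∩ Xs = ∅) (hBY : Bs ∩ Ys = ∅)
    (hbarrier : ∀ (b : ∀ j, Val j) (yv : ∀ j, Val j) (c : ∀ j, Noise j),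
      pr P {η | F R η = r ∧ ∀ j ∈ Bs \ {R}, F j η = b j} ≠ 0 →
      cpr P ({η | ∀ i ∈ Ys, F i η = yv i} ∩
             {η | ∀ j : ι, (∃ x ∈ Xs, Relation.ReflTransGen ED j x) → η j = c j})
          {η | F R η = r ∧ ∀ j ∈ Bs \ {R}, F j η = b j}
        = cpr P {η | ∀ i ∈ Ys, F i η = yv i}
            {η | F R η = r ∧ ∀ j ∈ Bs \ {R}, F j η = b j}
          * cpr P {η | ∀ j : ι, (∃ x ∈ Xs, Relation.ReflTransGen ED j x) → η j = c j}
              {η | F R η = r ∧ ∀ j ∈ Bs \ {R}, F j η = b j}) :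
    ∀ (b : ∀ j, Val j) (xv yv : ∀ j, Val j),
      pr P {η | F R η = r ∧ ∀ j ∈ Bs \ {R}, F j η = b j} ≠ 0 →
      cpr P ({η | ∀ i ∈ Xs, F i η = xv i} ∩ {η | ∀ i ∈ Ys, F i η = yv i})
          {η | F R η = r ∧ ∀ j ∈ Bs \ {R}, F j η = b j}
        = cpr P {η | ∀ i ∈ Xs, F i η = xv i}
            {η | F R η = r ∧ ∀ j ∈ Bs \ {R}, F j η = b j}
          * cpr P {η | ∀ i ∈ Ys, F i η = yv i}
              {η | F R η = r ∧ ∀ j ∈ Bs \ {R}, F j η = b j} := by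
  intro b xv yv hne
  set B : Set (∀ j, Noise j) := {η | F R η = r ∧ ∀ j ∈ Bs \ {R}, F j η = b j} with hBdef
  set Xev : Set (∀ j, Noise j) := {η | ∀ i ∈ Xs, F i η = xv i} with hXdef
  set Yev : Set (∀ j, Noise j) := {η | ∀ i ∈ Ys, F i η = yv i} with hYdef
  -- B is nonempty
  have hBne : ∃ η, η ∈ B := by
    by_contra hcon
    push_neg at hcon
    exact hne (pr_of_empty P hcon)
  obtain ⟨η0, hη0⟩ := hBne
  -- the partition by values of noises on ancestors of X
  set A : ι → Prop := fun j => ∃ x ∈ Xs, Relation.ReflTransGen ED j x with hAdef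
  haveI : DecidablePred A := Classical.decPred A
  set ext : (∀ j : {j // A j}, Noise j) → (∀ j, Noise j) :=
    fun c j => if h : A j then c ⟨j, h⟩ else η0 j with hextdef
  set E : (∀ j : {j // A j}, Noise j) → Set (∀ j, Noise j) :=
    fun c => {η | ∀ j : ι, (∃ x ∈ Xs, Relation.ReflTransGen ED j x) → η j = ext c j}
    with hEdef
  have hcover : ∀ ω : ∀ j, Noise j, ∃! c, ω ∈ E c := by
    intro ω
    refine ⟨fun j => ω j.1, ?_, ?_⟩
    · intro j hj
      simp only [hEdef, hextdef]
      rw [dif_pos hj]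
    · intro c hc
      funext j
      have := hc j.1 j.2
      simp only [hextdef] at this
      rw [dif_pos j.2] at this
      rw [← this]
  -- key fact: on B ∩ E c, the X-values are constant
  have hXconst : ∀ c, ∀ η η' : ∀ j, Noise j, η ∈ B → η' ∈ B → η ∈ E c → η' ∈ E c →
      ∀ i ∈ Xs, F i η = F i η' := by
    intro c η η' hη hη' hE hE' i hi
    refine hancD i η η' hη.1 hη'.1 ?_
    intro j hj
    have hjA : ∃ x ∈ Xs, Relation.ReflTransGen ED j x := ⟨i, hi, hj⟩
    rw [hE j hjA, hE' j hjA]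
  -- per-cell identities
  have keyXY : ∀ c, pr P ((Xev ∩ Yev ∩ B) ∩ E c)
      = if ∀ η, η ∈ B → η ∈ E c → η ∈ Xev then pr P ((Yev ∩ B) ∩ E c) else 0 := by
    intro c
    by_cases hQ : ∀ η, η ∈ B → η ∈ E c → η ∈ Xev
    · rw [if_pos hQ]
      refine pr_congr P fun ω => ?_
      constructor
      · rintro ⟨⟨⟨_, hy⟩, hb⟩, he⟩; exact ⟨⟨hy, hb⟩, he⟩
      · rintro ⟨⟨hy, hb⟩, he⟩; exact ⟨⟨⟨hQ ω hb he, hy⟩, hb⟩, he⟩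
    · rw [if_neg hQ]
      push_neg at hQ
      obtain ⟨η1, hη1B, hη1E, hη1X⟩ := hQ
      refine pr_of_empty P fun ω hω => hη1X ?_
      intro i hi
      rw [← hω.1.1.1 i hi]
      exact hXconst c η1 ω hη1B hω.1.2 hη1E hω.2 i hi
  have keyX : ∀ c, pr P ((Xev ∩ B) ∩ E c)
      = if ∀ η, η ∈ B → η ∈ E c → η ∈ Xev then pr P (B ∩ E c) else 0 := by
    intro c
    by_cases hQ : ∀ η, η ∈ B → η ∈ E c → η ∈ Xev
    · rw [if_pos hQ]
      refine pr_congr P fun ω => ?_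
      constructor
      · rintro ⟨⟨_, hb⟩, he⟩; exact ⟨hb, he⟩
      · rintro ⟨hb, he⟩; exact ⟨⟨hQ ω hb he, hb⟩, he⟩
    · rw [if_neg hQ]
      push_neg at hQ
      obtain ⟨η1, hη1B, hη1E, hη1X⟩ := hQ
      refine pr_of_empty P fun ω hω => hη1X ?_
      intro i hi
      rw [← hω.1.1 i hi]
      exact hXconst c η1 ω hη1B hω.1.2 hη1E hω.2 i hi
  -- barrier condition rewritten
  have hbar : ∀ c, pr P ((Yev ∩ B) ∩ E c) = pr P (Yev ∩ B) * pr P (B ∩ E c) / pr P B := by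
    intro c
    have h := hbarrier b yv (ext c) hne
    simp only [cpr] at h
    have h1 : pr P ((Yev ∩ E c) ∩ B) / pr P B
        = pr P (Yev ∩ B) / pr P B * (pr P (E c ∩ B) / pr P B) := h
    have h2 : pr P ((Yev ∩ B) ∩ E c) = pr P ((Yev ∩ E c) ∩ B) :=
      pr_congr P fun ω => by constructor <;> (rintro ⟨⟨h1, h2⟩, h3⟩; exact ⟨⟨h1, h3⟩, h2⟩)
    have h3 : pr P (B ∩ E c) = pr P (E c ∩ B) :=
      pr_congr P fun ω => by constructor <;> (rintro ⟨h1, h2⟩; exact ⟨h2, h1⟩)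
    rw [h2, h3, eq_div_iff hne]
    rw [div_eq_iff hne] at h1
    rw [h1]
    field_simp
  -- assemble
  have hXY : pr P ((Xev ∩ Yev) ∩ B) = pr P (Xev ∩ B) * pr P (Yev ∩ B) / pr P B := by
    rw [pr_partition P E hcover ((Xev ∩ Yev) ∩ B),
        pr_partition P E hcover (Xev ∩ B)]
    calc ∑ c, pr P (((Xev ∩ Yev) ∩ B) ∩ E c)
        = ∑ c, (if ∀ η, η ∈ B → η ∈ E c → η ∈ Xev then pr P (B ∩ E c) else 0)
            * pr P (Yev ∩ B) / pr P B := by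
          refine Finset.sum_congr rfl fun c _ => ?_
          rw [keyXY c]
          split_ifs with hQ
          · rw [hbar c]; ring
          · simp
      _ = (∑ c, (if ∀ η, η ∈ B → η ∈ E c → η ∈ Xev then pr P (B ∩ E c) else 0))
            * pr P (Yev ∩ B) / pr P B := by
          rw [Finset.sum_mul, Finset.sum_div]
      _ = (∑ c, pr P ((Xev ∩ B) ∩ E c)) * pr P (Yev ∩ B) / pr P B := by
          congr 2
          exact Finset.sum_congr rfl fun c _ => (keyX c).symm
  simp only [cpr]
  rw [hXY, div_div, div_mul_div_comm]
end

section
/- Context-specific Markov property: in a strongly regime-acyclic, causally sufficient SCM, if X and Y (both ≠ R) are non-adjacent in the identified graph G_ident(r), then either (a) X ⫫ Y | Z for Z = Pa_union(X) or Z = Pa_union(Y), or (b) X ⫫ Y | Z, R = r for Z = Pa_descr(r)(X) − {R} or Z = Pa_descr(r)(Y) − {R}. Moreover, if X or Y is not a union-ancestor of R then case (b) applies, and otherwise case (a) applies. -/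
open scoped Classical

/-- `X ⫫ Y | {F_j = z_j : j ∈ Zs}, Extra` for all values. -/
def ciGiven {ι : Type*} [Fintype ι] [DecidableEq ι]
    {Val : ι → Type*} {Noise : ι → Type*} [∀ j, Fintype (Noise j)]
    (P : (∀ j, Noise j) → ℝ) (F : ∀ i : ι, (∀ j, Noise j) → Val i)
    (X Y : ι) (Zs : Set ι) (Extra : Set (∀ j, Noise j)) : Prop :=
  ∀ (z : ∀ j, Val j) (x : Val X) (y : Val Y),
    pr P ({η | ∀ j ∈ Zs, F j η = z j} ∩ Extra) ≠ 0 →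
    cpr P ({η | F X η = x} ∩ {η | F Y η = y}) ({η | ∀ j ∈ Zs, F j η = z j} ∩ Extra)
      = cpr P {η | F X η = x} ({η | ∀ j ∈ Zs, F j η = z j} ∩ Extra)
        * cpr P {η | F Y η = y} ({η | ∀ j ∈ Zs, F j η = z j} ∩ Extra)

/-- The identified graph `G_ident(r)`: descriptive edges plus all union edges between
union-ancestors of `R`. -/
def identEdge {ι : Type*} (PaU PaD : ι → Set ι) (R : ι) (a b : ι) : Prop :=
  a ∈ PaD b ∨ (a ∈ PaU b ∧ Relation.ReflTransGen (fun x y => x ∈ PaU y) a R ∧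
    Relation.ReflTransGen (fun x y => x ∈ PaU y) b R)

section Key
variable {ι : Type*} [Fintype ι] [DecidableEq ι] {Noise : ι → Type*} [∀ j, Fintype (Noise j)]

/-- the involution `(η, n) ↦ (update η W n, η W)`. -/
def flipUpd (W : ι) : ((∀ j, Noise j) × Noise W) ≃ ((∀ j, Noise j) × Noise W) where
  toFun x := (Function.update x.1 W x.2, x.1 W)
  invFun x := (Function.update x.1 W x.2, x.1 W)
  left_inv x := by
    simp [Function.update_idem, Function.update_eq_self]
  right_inv x := by
    simp [Function.update_idem, Function.update_eq_self]

lemma key_lemma (p : ∀ j, Noise j → ℝ) (hsump : ∀ j : ι, ∑ n, p j n = 1)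
    (P : (∀ j, Noise j) → ℝ) (hP : ∀ η, P η = ∏ j, p j (η j))
    (W : ι) (A : Set (∀ j, Noise j))
    (hA : ∀ (η : ∀ j, Noise j) (n : Noise W), η ∈ A → Function.update η W n ∈ A)
    (T : Set (Noise W)) :
    pr P (A ∩ {η | η W ∈ T}) = (∑ n, if n ∈ T then p W n else 0) * pr P A := by
  classical
  have hPP : ∀ (η : ∀ j, Noise j) (n : Noise W),
      P (Function.update η W n) * p W (η W) = P η * p W n := by
    intro η n
    have h1 : P (Function.update η W n) = p W n * ∏ j ∈ Finset.univ.erase W, p j (η j) := by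
      rw [hP]
      have h : (fun j => p j (Function.update η W n j))
          = Function.update (fun j => p j (η j)) W (p W n) := by
        funext j
        by_cases h : j = W
        · subst h; simp
        · simp [Function.update_of_ne h]
      calc ∏ j, p j (Function.update η W n j)
          = ∏ j, Function.update (fun j => p j (η j)) W (p W n) j := by rw [h]
        _ = p W n * ∏ j ∈ Finset.univ.erase W, p j (η j) := by
            rw [Finset.prod_update_of_mem (Finset.mem_univ W), Finset.erase_eq]
    have h2 : P η = p W (η W) * ∏ j ∈ Finset.univ.erase W, p j (η j) := by
      rw [hP]; exact (Finset.mul_prod_erase Finset.univ _ (Finset.mem_univ W)).symm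
    rw [h1, h2]; ring
  have hAiff : ∀ (η : ∀ j, Noise j) (n : Noise W),
      (Function.update η W n ∈ A) ↔ η ∈ A := by
    intro η n
    constructor
    · intro h
      have := hA _ (η W) h
      rwa [Function.update_idem, Function.update_eq_self] at this
    · exact hA η n
  have main : pr P (A ∩ {η | η W ∈ T}) * (∑ n, p W n)
      = pr P A * (∑ n, if n ∈ T then p W n else 0) := by
    have e1 : pr P (A ∩ {η | η W ∈ T}) * (∑ n, p W n)
        = ∑ x : (∀ j, Noise j) × Noise W,
            (if x.1 ∈ A ∩ {η | η W ∈ T} then P x.1 else 0) * p W x.2 := by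
      unfold pr; rw [Fintype.sum_prod_type, Finset.sum_mul_sum]
      exact Finset.sum_congr rfl fun x _ => Finset.sum_congr rfl fun y _ => by congr
    have e2 : pr P A * (∑ n, if n ∈ T then p W n else 0)
        = ∑ x : (∀ j, Noise j) × Noise W,
            (if x.1 ∈ A then P x.1 else 0) * (if x.2 ∈ T then p W x.2 else 0) := by
      unfold pr; rw [Fintype.sum_prod_type, Finset.sum_mul_sum]
    rw [e1, e2, ← Equiv.sum_comp (flipUpd (Noise := Noise) W)
      (fun x : (∀ j, Noise j) × Noise W =>
        (if x.1 ∈ A ∩ {η | η W ∈ T} then P x.1 else 0) * p W x.2)]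
    apply Finset.sum_congr rfl
    intro x _
    obtain ⟨η, n⟩ := x
    simp only [flipUpd, Equiv.coe_fn_mk]
    by_cases hη : η ∈ A
    · by_cases hn : n ∈ T
      · have hmem : Function.update η W n ∈ A ∩ {η | η W ∈ T} := by
          refine ⟨(hAiff η n).2 hη, ?_⟩
          simp [hn]
        simp only [hmem, hη, hn, ↓reduceIte]
        exact hPP η n
      · have hmem : Function.update η W n ∉ A ∩ {η | η W ∈ T} := by
          intro h
          exact hn (by simpa using h.2)
        simp only [hmem, hn, ↓reduceIte]
        ring
    · have hmem : Function.update η W n ∉ A ∩ {η | η W ∈ T} := by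
        intro h
        exact hη ((hAiff η n).1 h.1)
      simp only [hmem, hη, ↓reduceIte]
      ring
  rw [hsump W, mul_one] at main
  rw [main, mul_comm]

end Key

section Indep
variable {ι : Type*} [Fintype ι] [DecidableEq ι] {Noise : ι → Type*} [∀ j, Fintype (Noise j)]

lemma indep_lemma (p : ∀ j, Noise j → ℝ) (hsump : ∀ j : ι, ∑ n, p j n = 1)
    (P : (∀ j, Noise j) → ℝ) (hP : ∀ η, P η = ∏ j, p j (η j))
    (W : ι) (S G E : Set (∀ j, Noise j))
    (hS : ∀ (η : ∀ j, Noise j) (n : Noise W), η ∈ S → η ∈ E → Function.update η W n ∈ S)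
    (hE : ∀ (η : ∀ j, Noise j) (n : Noise W), η ∈ E → Function.update η W n ∈ E)
    (hG : ∀ η η', η ∈ E → η' ∈ E → η' ∈ G → η W = η' W → η ∈ G)
    (hEne : pr P E ≠ 0) :
    cpr P (S ∩ G) E = cpr P S E * cpr P G E := by
  classical
  set T : Set (Noise W) := {n | ∃ η, η ∈ E ∩ G ∧ η W = n} with hT
  have hSE : ∀ (η : ∀ j, Noise j) (n : Noise W), η ∈ S ∩ E → Function.update η W n ∈ S ∩ E :=
    fun η n h => ⟨hS η n h.1 h.2, hE η n h.2⟩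
  have h1 : (S ∩ G) ∩ E = (S ∩ E) ∩ {η | η W ∈ T} := by
    ext η
    constructor
    · rintro ⟨⟨hs, hg⟩, he⟩
      exact ⟨⟨hs, he⟩, ⟨η, ⟨he, hg⟩, rfl⟩⟩
    · rintro ⟨⟨hs, he⟩, ⟨η', ⟨he', hg'⟩, hw⟩⟩
      exact ⟨⟨hs, hG η η' he he' hg' hw.symm⟩, he⟩
  have h2 : G ∩ E = E ∩ {η | η W ∈ T} := by
    ext η
    constructor
    · rintro ⟨hg, he⟩
      exact ⟨he, ⟨η, ⟨he, hg⟩, rfl⟩⟩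
    · rintro ⟨he, ⟨η', ⟨he', hg'⟩, hw⟩⟩
      exact ⟨hG η η' he he' hg' hw.symm, he⟩
  unfold cpr
  rw [h1, h2, key_lemma p hsump P hP W (S ∩ E) hSE T, key_lemma p hsump P hP W E hE T]
  field_simp

end Indep

section Wrap
variable {ι : Type*} [Fintype ι] [DecidableEq ι] {Val : ι → Type*} {Noise : ι → Type*}
  [∀ j, Fintype (Noise j)]

lemma ciGiven_symm (P : (∀ j, Noise j) → ℝ) (F : ∀ i : ι, (∀ j, Noise j) → Val i)
    (X Y : ι) (Zs : Set ι) (Extra : Set (∀ j, Noise j))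
    (h : ciGiven P F Y X Zs Extra) : ciGiven P F X Y Zs Extra := by
  intro z x y hne
  have := h z y x hne
  rwa [Set.inter_comm, mul_comm] at this

/-- the main wrapper: `Y` is the "conditioned" vertex. -/
lemma ciGiven_of (p : ∀ j, Noise j → ℝ) (hsump : ∀ j : ι, ∑ n, p j n = 1)
    (P : (∀ j, Noise j) → ℝ) (hP : ∀ η, P η = ∏ j, p j (η j))
    (F : ∀ i : ι, (∀ j, Noise j) → Val i)
    (X Y : ι) (Zs : Set ι) (Extra : Set (∀ j, Noise j))
    (hExtra : ∀ (η : ∀ j, Noise j) (n : Noise Y), η ∈ Extra → Function.update η Y n ∈ Extra)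
    (hZ : ∀ j ∈ Zs, ∀ (η : ∀ j, Noise j) (n : Noise Y), η ∈ Extra →
      F j (Function.update η Y n) = F j η)
    (hX : ∀ (η : ∀ j, Noise j) (n : Noise Y), η ∈ Extra →
      F X (Function.update η Y n) = F X η)
    (hYfun : ∀ (z : ∀ j, Val j) (η η' : ∀ j, Noise j),
      (∀ j ∈ Zs, F j η = z j) → η ∈ Extra → (∀ j ∈ Zs, F j η' = z j) → η' ∈ Extra →
      η Y = η' Y → F Y η = F Y η') :
    ciGiven P F X Y Zs Extra := by
  intro z x y hne
  refine indep_lemma p hsump P hP Y _ _ _ ?_ ?_ ?_ hne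
  · intro η n hs he
    show F X (Function.update η Y n) = x
    rw [hX η n he.2]; exact hs
  · intro η n he
    exact ⟨fun j hj => (hZ j hj η n he.2).trans (he.1 j hj), hExtra η n he.2⟩
  · intro η η' he he' hg' hw
    show F Y η = y
    rw [hYfun z η η' he.1 he.2 he'.1 he'.2 hw]; exact hg'

end Wrap

/-- context-specific Markov property. In a strongly regime-acyclic,
causally sufficient SCM, if `X, Y ≠ R` are non-adjacent in `G_ident(r)`, then either
(a) `X ⫫ Y | Z` for `Z = Pa_union(X)` or `Z = Pa_union(Y)`, or
(b) `X ⫫ Y | Z, R = r` for `Z = Pa_descr(r)(X) − {R}` or `Z = Pa_descr(r)(Y) − {R}`;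
moreover if `X` or `Y` is not a union-ancestor of `R` then (b) applies, and otherwise
(a) applies. -/
theorem stmt_13 {ι : Type*} [Fintype ι] [DecidableEq ι]
    (Val : ι → Type*) (Noise : ι → Type*) [∀ j, Fintype (Noise j)]
    (p : ∀ j, Noise j → ℝ)
    (hpos : ∀ (j : ι) (n : Noise j), 0 ≤ p j n) (hsump : ∀ j : ι, ∑ n, p j n = 1)
    (P : (∀ j, Noise j) → ℝ)
    (hP : ∀ η : ∀ j, Noise j, P η = ∏ j, p j (η j))  -- causal sufficiency
    (R : ι) (r : Val R)
    (PaU PaD : ι → Set ι)  -- union parents, descriptive parents for regime r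
    (f : ∀ i : ι, (∀ j, Val j) → Noise i → Val i)
    (F : ∀ i : ι, (∀ j, Noise j) → Val i)
    (hfix : ∀ (i : ι) (η : ∀ j, Noise j), F i η = f i (fun j => F j η) (η i))
    (hpaU : ∀ (i : ι) (v v' : ∀ j, Val j) (n : Noise i),
      (∀ j ∈ PaU i, v j = v' j) → f i v n = f i v' n)
    (hancU : ∀ (i : ι) (η η' : ∀ j, Noise j),
      (∀ j : ι, Relation.ReflTransGen (fun a b => a ∈ PaU b) j i → η j = η' j) →
      F i η = F i η')
    (hancD : ∀ (i : ι) (η η' : ∀ j, Noise j), F R η = r → F R η' = r →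
      (∀ j : ι, Relation.ReflTransGen (fun a b => a ∈ PaD b) j i → η j = η' j) →
      F i η = F i η')
    (hlocD : ∀ i : ι, i ≠ R → ∀ (η η' : ∀ j, Noise j), F R η = r → F R η' = r →
      (∀ j ∈ PaD i, F j η = F j η') → η i = η' i → F i η = F i η')
    -- strong regime-acyclicity:
    (hacycD : ∀ i : ι, ¬ Relation.TransGen (fun a b => a ∈ PaD b) i i)
    (hacycU : ∀ i : ι, Relation.ReflTransGen (fun a b => a ∈ PaU b) i R →
      ¬ Relation.TransGen (fun a b => a ∈ PaU b) i i)
    (X Y : ι) (hXR : X ≠ R) (hYR : Y ≠ R) (hXY : X ≠ Y)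
    (hnonadj : ¬ identEdge PaU PaD R X Y ∧ ¬ identEdge PaU PaD R Y X) :
    ((ciGiven P F X Y (PaU X) Set.univ ∨ ciGiven P F X Y (PaU Y) Set.univ) ∨
     (ciGiven P F X Y (PaD X \ {R}) {η | F R η = r} ∨
      ciGiven P F X Y (PaD Y \ {R}) {η | F R η = r})) ∧
    ((¬ Relation.ReflTransGen (fun a b => a ∈ PaU b) X R ∨
      ¬ Relation.ReflTransGen (fun a b => a ∈ PaU b) Y R) →
      (ciGiven P F X Y (PaD X \ {R}) {η | F R η = r} ∨
       ciGiven P F X Y (PaD Y \ {R}) {η | F R η = r})) ∧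
    ((Relation.ReflTransGen (fun a b => a ∈ PaU b) X R ∧
      Relation.ReflTransGen (fun a b => a ∈ PaU b) Y R) →
      (ciGiven P F X Y (PaU X) Set.univ ∨ ciGiven P F X Y (PaU Y) Set.univ)) := by
  classical
  obtain ⟨hnadj1, hnadj2⟩ := hnonadj
  -- part (a)
  have partA : (Relation.ReflTransGen (fun a b => a ∈ PaU b) X R ∧
      Relation.ReflTransGen (fun a b => a ∈ PaU b) Y R) →
      (ciGiven P F X Y (PaU X) Set.univ ∨ ciGiven P F X Y (PaU Y) Set.univ) := by
    rintro ⟨hXU, hYU⟩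
    have main : ∀ A B : ι, A ≠ B →
        Relation.ReflTransGen (fun a b => a ∈ PaU b) A R →
        Relation.ReflTransGen (fun a b => a ∈ PaU b) B R →
        ¬ Relation.ReflTransGen (fun a b => a ∈ PaU b) B A →
        ciGiven P F A B (PaU B) Set.univ := by
      intro A B hAB hAU hBU hBA
      apply ciGiven_of p hsump P hP F A B (PaU B) Set.univ
      · intro η n _; trivial
      · intro j hj η n _
        apply hancU j
        intro k hk
        have hkB : k ≠ B := fun h =>
          hacycU B hBU (Relation.TransGen.tail' (by rw [← h]; exact hk) hj)
        exact Function.update_of_ne hkB n η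
      · intro η n _
        apply hancU A
        intro k hk
        exact Function.update_of_ne (fun h => hBA (by rw [← h]; exact hk)) n η
      · intro z η η' hz _ hz' _ hB
        rw [hfix B η, hfix B η', hB]
        exact (hpaU B _ z _ (fun j hj => hz j hj)).trans
          ((hpaU B _ z _ (fun j hj => hz' j hj)).symm)
    by_cases hYX : Relation.ReflTransGen (fun a b => a ∈ PaU b) Y X
    · have hXY' : ¬ Relation.ReflTransGen (fun a b => a ∈ PaU b) X Y := by
        intro h
        rcases Relation.reflTransGen_iff_eq_or_transGen.mp h with h1 | h1
        · exact hXY h1.symm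
        · exact hacycU X hXU (h1.trans_left hYX)
      exact Or.inl (ciGiven_symm P F X Y _ _ (main Y X hXY.symm hYU hXU hXY'))
    · exact Or.inr (main X Y hXY hXU hYU hYX)
  -- part (b)
  have partB : (¬ Relation.ReflTransGen (fun a b => a ∈ PaU b) X R ∨
      ¬ Relation.ReflTransGen (fun a b => a ∈ PaU b) Y R) →
      (ciGiven P F X Y (PaD X \ {R}) {η | F R η = r} ∨
       ciGiven P F X Y (PaD Y \ {R}) {η | F R η = r}) := by
    intro hcase
    have main : ∀ A B : ι, B ≠ R →
        ¬ Relation.ReflTransGen (fun a b => a ∈ PaU b) B R →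
        (¬ Relation.ReflTransGen (fun a b => a ∈ PaU b) B A ∨
         ¬ Relation.ReflTransGen (fun a b => a ∈ PaD b) B A) →
        ciGiven P F A B (PaD B \ {R}) {η | F R η = r} := by
      intro A B hBR hBU hBA
      have hupdR : ∀ (η : ∀ j, Noise j) (n : Noise B),
          F R (Function.update η B n) = F R η := by
        intro η n
        apply hancU R
        intro k hk
        exact Function.update_of_ne (fun h => hBU (by rw [← h]; exact hk)) n η
      apply ciGiven_of p hsump P hP F A B (PaD B \ {R}) {η | F R η = r}
      · intro η n he
        show F R _ = r
        rw [hupdR]; exact he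
      · intro j hj η n he
        have hjB : ¬ Relation.ReflTransGen (fun a b => a ∈ PaD b) B j :=
          fun h => hacycD B (Relation.TransGen.tail' h hj.1)
        apply hancD j _ _ (by rw [hupdR]; exact he) he
        intro k hk
        exact Function.update_of_ne (fun h => hjB (by rw [← h]; exact hk)) n η
      · intro η n he
        rcases hBA with hBA | hBA
        · apply hancU A
          intro k hk
          exact Function.update_of_ne (fun h => hBA (by rw [← h]; exact hk)) n η
        · apply hancD A _ _ (by rw [hupdR]; exact he) he
          intro k hk
          exact Function.update_of_ne (fun h => hBA (by rw [← h]; exact hk)) n η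
      · intro z η η' hz he hz' he' hB
        apply hlocD B hBR η η' he he' _ hB
        intro j hj
        by_cases hjR : j = R
        · rw [hjR]
          exact (show F R η = r from he).trans (show F R η' = r from he').symm
        · rw [hz j ⟨hj, by simp [hjR]⟩, hz' j ⟨hj, by simp [hjR]⟩]
    by_cases hXU : Relation.ReflTransGen (fun a b => a ∈ PaU b) X R
    · have hYU : ¬ Relation.ReflTransGen (fun a b => a ∈ PaU b) Y R :=
        hcase.resolve_left (not_not_intro hXU)
      have hYX' : ¬ Relation.ReflTransGen (fun a b => a ∈ PaU b) Y X :=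
        fun h => hYU (h.trans hXU)
      exact Or.inr (main X Y hYR hYU (Or.inl hYX'))
    · by_cases hYU : Relation.ReflTransGen (fun a b => a ∈ PaU b) Y R
      · have hXY' : ¬ Relation.ReflTransGen (fun a b => a ∈ PaU b) X Y :=
          fun h => hXU (h.trans hYU)
        exact Or.inl (ciGiven_symm P F X Y _ _ (main Y X hXR hXU (Or.inl hXY')))
      · by_cases hYX : Relation.ReflTransGen (fun a b => a ∈ PaD b) Y X
        · have hXY' : ¬ Relation.ReflTransGen (fun a b => a ∈ PaD b) X Y := by
            intro h
            rcases Relation.reflTransGen_iff_eq_or_transGen.mp h with h1 | h1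
            · exact hXY h1.symm
            · exact hacycD X (h1.trans_left hYX)
          exact Or.inl (ciGiven_symm P F X Y _ _ (main Y X hXR hXU (Or.inr hXY')))
        · exact Or.inr (main X Y hYR hYU (Or.inr hYX))
  refine ⟨?_, partB, partA⟩
  by_cases h : Relation.ReflTransGen (fun a b => a ∈ PaU b) X R ∧
      Relation.ReflTransGen (fun a b => a ∈ PaU b) Y R
  · exact Or.inl (partA h)
  · exact Or.inr (partB (by tauto))
end

section
/- Under the assumptions of the context-specific Markov property (strong regime-acyclicity, causal sufficiency), if X and Y are non-adjacent in G_ident(r) and both differ from R, then there exists a separating set Z contained in the G_ident(r)-adjacencies of X or of Y such that either X ⫫ Y | Z, or X ⫫ Y | Z, R = r with Z not containing R. -/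
open scoped Classical

/-! Both alternatives are instances of the local Markov property: a variable `W` is independent
of a non-descendant `V` given its parents. Since the noise is a product distribution, this
reduces to a single coordinate: on the conditioning event, `F W` is a function of the noise
`η W` alone, while the event itself and `F V` do not depend on `η W`. For a union-ancestor `W`
of `R`, union acyclicity at `W` gives this with the union parents of `W`. Otherwise `F R` does
not depend on `η W`, so the regime event `R = r` is unaffected too, and descriptive acyclicity
gives it with the descriptive parents of `W`. For `X ≠ Y`, a cycle argument shows that one of
`X`, `Y` can play the role of `W`. -/

section ProductMeasure

variable {ι : Type*} [Fintype ι] [DecidableEq ι] {Noise : ι → Type*} [∀ j, Fintype (Noise j)]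

theorem pr_eq_mul_of_mem_iff (p : ∀ j, Noise j → ℝ) {P : (∀ j, Noise j) → ℝ}
    (hP : ∀ η, P η = ∏ j, p j (η j)) (W : ι) (A : Set (∀ j, Noise j))
    (c : Noise W → Prop) (d : (∀ j : {j // j ≠ W}, Noise j) → Prop)
    (hA : ∀ η, η ∈ A ↔ c (η W) ∧ d fun j => η j) :
    pr P A = (∑ a, if c a then p W a else 0) *
      ∑ b : ∀ j : {j // j ≠ W}, Noise j, if d b then ∏ j, p j.1 (b j) else 0 := by
  rw [pr, Finset.sum_mul_sum, ← Fintype.sum_prod_type']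
  refine Fintype.sum_equiv (Equiv.piSplitAt W Noise) _ _ fun η => ?_
  simp only [Equiv.piSplitAt_apply, hA, hP η, Fintype.prod_eq_mul_prod_subtype_ne _ W]
  split_ifs <;> simp_all

theorem pr_coord_inter_eq_mul (p : ∀ j, Noise j → ℝ) (hsump : ∀ j, ∑ n, p j n = 1)
    {P : (∀ j, Noise j) → ℝ} (hP : ∀ η, P η = ∏ j, p j (η j)) (W : ι)
    (C : Noise W → Prop) {D : Set (∀ j, Noise j)}
    (hD : ∀ η η', (∀ j ≠ W, η j = η' j) → η ∈ D → η' ∈ D) :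
    pr P ({η | C (η W)} ∩ D) = pr P {η | C (η W)} * pr P D := by
  set d : (∀ j : {j // j ≠ W}, Noise j) → Prop :=
    fun b => ∃ η ∈ D, (fun j : {j // j ≠ W} => η j) = b
  have hd : ∀ η, η ∈ D ↔ d fun j => η j := fun η =>
    ⟨fun h => ⟨η, h, rfl⟩, fun ⟨η', h', hη'⟩ => hD η' η (fun j hj => congrFun hη' ⟨j, hj⟩) h'⟩
  have hrest : ∑ b : ∀ j : {j // j ≠ W}, Noise j, ∏ j, p j.1 (b j) = 1 := by
    rw [← Fintype.prod_sum]; simp [hsump]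
  rw [pr_eq_mul_of_mem_iff p hP W ({η | C (η W)} ∩ D) C d fun η => and_congr_right' (hd η),
    pr_eq_mul_of_mem_iff p hP W {η | C (η W)} C (fun _ => True)
      fun _ => (and_iff_left trivial).symm,
    pr_eq_mul_of_mem_iff p hP W D (fun _ => True) d
      fun η => (hd η).trans (and_iff_right trivial).symm]
  simp only [if_true, hsump, hrest]
  ring

theorem cpr_inter_eq_mul_of_coord {α β : Type*} (p : ∀ j, Noise j → ℝ)
    (hsump : ∀ j, ∑ n, p j n = 1) {P : (∀ j, Noise j) → ℝ} (hP : ∀ η, P η = ∏ j, p j (η j))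
    (W : ι) {S : Set (∀ j, Noise j)} (hS : ∀ η η', (∀ j ≠ W, η j = η' j) → η ∈ S → η' ∈ S)
    {g : (∀ j, Noise j) → α} {h : (∀ j, Noise j) → β}
    (hg : ∀ η ∈ S, ∀ η' ∈ S, η W = η' W → g η = g η')
    (hh : ∀ η ∈ S, ∀ η' ∈ S, (∀ j ≠ W, η j = η' j) → h η = h η') (x : α) (y : β) :
    cpr P ({η | g η = x} ∩ {η | h η = y}) S = cpr P {η | g η = x} S * cpr P {η | h η = y} S := by
  -- On `S` the event `g = x` only depends on the coordinate `W`.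
  set C : Noise W → Prop := fun a => ∃ η ∈ S, η W = a ∧ g η = x
  have hC : ∀ η ∈ S, g η = x ↔ C (η W) := fun η hη =>
    ⟨fun hx => ⟨η, hη, rfl, hx⟩, fun ⟨η', hη', hW, hx⟩ => hg η hη η' hη' hW.symm ▸ hx⟩
  have hhS : ∀ η η', (∀ j ≠ W, η j = η' j) → η ∈ {η | h η = y} ∩ S → η' ∈ {η | h η = y} ∩ S :=
    fun η η' hag ⟨hy, hη⟩ => ⟨(hh η hη η' (hS η η' hag hη) hag).symm.trans hy, hS η η' hag hη⟩
  have hgh : ({η | g η = x} ∩ {η | h η = y}) ∩ S = {η | C (η W)} ∩ ({η | h η = y} ∩ S) := by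
    ext η
    exact ⟨fun ⟨⟨hx, hy⟩, hη⟩ => ⟨(hC η hη).mp hx, hy, hη⟩,
      fun ⟨hx, hy, hη⟩ => ⟨⟨(hC η hη).mpr hx, hy⟩, hη⟩⟩
  have hgS : {η | g η = x} ∩ S = {η | C (η W)} ∩ S := by
    ext η
    exact ⟨fun ⟨hx, hη⟩ => ⟨(hC η hη).mp hx, hη⟩, fun ⟨hx, hη⟩ => ⟨(hC η hη).mpr hx, hη⟩⟩
  simp only [cpr]
  rw [hgh, hgS, pr_coord_inter_eq_mul p hsump hP W C hhS, pr_coord_inter_eq_mul p hsump hP W C hS]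
  rcases eq_or_ne (pr P S) 0 with hS0 | hS0
  · simp [hS0]
  · field_simp

end ProductMeasure

theorem ciGiven_comm {ι : Type*} [Fintype ι] [DecidableEq ι] {Val : ι → Type*}
    {Noise : ι → Type*} [∀ j, Fintype (Noise j)] {P : (∀ j, Noise j) → ℝ}
    {F : ∀ i : ι, (∀ j, Noise j) → Val i} {X Y : ι} {Zs : Set ι} {Extra : Set (∀ j, Noise j)}
    (h : ciGiven P F X Y Zs Extra) : ciGiven P F Y X Zs Extra := by
  intro z y x hz
  rw [Set.inter_comm, h z x y hz, mul_comm]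

open Relation

section CausalModel

variable {ι : Type*} [Fintype ι] [DecidableEq ι] {Val : ι → Type*} {Noise : ι → Type*}
  [∀ j, Fintype (Noise j)]

theorem ciGiven_of_coord (p : ∀ j, Noise j → ℝ) (hsump : ∀ j, ∑ n, p j n = 1)
    {P : (∀ j, Noise j) → ℝ} (hP : ∀ η, P η = ∏ j, p j (η j))
    {F : ∀ i : ι, (∀ j, Noise j) → Val i} {X Y : ι} {Zs : Set ι} {Extra : Set (∀ j, Noise j)}
    (hExtra : ∀ η η', (∀ k ≠ X, η k = η' k) → η ∈ Extra → η' ∈ Extra)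
    (hZs : ∀ j ∈ Zs, ∀ η ∈ Extra, ∀ η' ∈ Extra, (∀ k ≠ X, η k = η' k) → F j η = F j η')
    (hX : ∀ η ∈ Extra, ∀ η' ∈ Extra, (∀ j ∈ Zs, F j η = F j η') → η X = η' X →
      F X η = F X η')
    (hY : ∀ η ∈ Extra, ∀ η' ∈ Extra, (∀ k ≠ X, η k = η' k) → F Y η = F Y η') :
    ciGiven P F X Y Zs Extra := by
  intro z x y _
  refine cpr_inter_eq_mul_of_coord p hsump hP X ?_ ?_ ?_ x y
  · intro η η' hag ⟨hz, hη⟩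
    have hη' := hExtra η η' hag hη
    exact ⟨fun j hj => (hZs j hj η hη η' hη' hag).symm.trans (hz j hj), hη'⟩
  · exact fun η hη η' hη' => hX η hη.2 η' hη'.2 fun j hj => (hη.1 j hj).trans (hη'.1 j hj).symm
  · exact fun η hη η' hη' => hY η hη.2 η' hη'.2

theorem ciGiven_localMarkov_union (p : ∀ j, Noise j → ℝ) (hsump : ∀ j, ∑ n, p j n = 1)
    {P : (∀ j, Noise j) → ℝ} (hP : ∀ η, P η = ∏ j, p j (η j)) {PaU : ι → Set ι}
    (f : ∀ i : ι, (∀ j, Val j) → Noise i → Val i) {F : ∀ i : ι, (∀ j, Noise j) → Val i}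
    (hfix : ∀ (i : ι) (η : ∀ j, Noise j), F i η = f i (fun j => F j η) (η i))
    (hpaU : ∀ (i : ι) (v v' : ∀ j, Val j) (n : Noise i),
      (∀ j ∈ PaU i, v j = v' j) → f i v n = f i v' n)
    (hancU : ∀ (i : ι) (η η' : ∀ j, Noise j),
      (∀ j : ι, ReflTransGen (· ∈ PaU ·) j i → η j = η' j) → F i η = F i η')
    {W V : ι} (hW : ¬ TransGen (· ∈ PaU ·) W W) (hV : ¬ ReflTransGen (· ∈ PaU ·) W V) :
    ciGiven P F W V (PaU W) Set.univ := by
  refine ciGiven_of_coord p hsump hP (fun _ _ _ _ => trivial) ?_ ?_ ?_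
  · intro j hj η _ η' _ hag
    exact hancU j η η' fun k hk => hag k (by rintro rfl; exact hW (.tail' hk hj))
  · intro η _ η' _ hpa hW
    rw [hfix W η, hfix W η', hW]
    exact hpaU W _ _ _ hpa
  · intro η _ η' _ hag
    exact hancU V η η' fun k hk => hag k (by rintro rfl; exact hV hk)

theorem ciGiven_localMarkov_regime (p : ∀ j, Noise j → ℝ) (hsump : ∀ j, ∑ n, p j n = 1)
    {P : (∀ j, Noise j) → ℝ} (hP : ∀ η, P η = ∏ j, p j (η j)) {R : ι} {r : Val R}
    {PaU PaD : ι → Set ι} {F : ∀ i : ι, (∀ j, Noise j) → Val i}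
    (hancU : ∀ (i : ι) (η η' : ∀ j, Noise j),
      (∀ j : ι, ReflTransGen (· ∈ PaU ·) j i → η j = η' j) → F i η = F i η')
    (hancD : ∀ (i : ι) (η η' : ∀ j, Noise j), F R η = r → F R η' = r →
      (∀ j : ι, ReflTransGen (· ∈ PaD ·) j i → η j = η' j) → F i η = F i η')
    (hlocD : ∀ i : ι, i ≠ R → ∀ (η η' : ∀ j, Noise j), F R η = r → F R η' = r →
      (∀ j ∈ PaD i, F j η = F j η') → η i = η' i → F i η = F i η')
    {W V : ι} (hW : ¬ TransGen (· ∈ PaD ·) W W) (hWR : ¬ ReflTransGen (· ∈ PaU ·) W R)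
    (hV : ¬ ReflTransGen (· ∈ PaD ·) W V ∨ ¬ ReflTransGen (· ∈ PaU ·) W V) :
    ciGiven P F W V (PaD W \ {R}) {η | F R η = r} := by
  refine ciGiven_of_coord p hsump hP ?_ ?_ ?_ ?_
  · intro η η' hag hη
    exact (hancU R η' η fun k hk => (hag k (by rintro rfl; exact hWR hk)).symm).trans hη
  · intro j hj η hη η' hη' hag
    exact hancD j η η' hη hη' fun k hk => hag k (by rintro rfl; exact hW (.tail' hk hj.1))
  · intro η hη η' hη' hpa hW
    refine hlocD W (by rintro rfl; exact hWR .refl) η η' hη hη' (fun j hj => ?_) hW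
    by_cases hjR : j = R
    · subst hjR
      exact hη.trans hη'.symm
    · exact hpa j ⟨hj, hjR⟩
  · intro η hη η' hη' hag
    rcases hV with hV | hV
    · exact hancD V η η' hη hη' fun k hk => hag k (by rintro rfl; exact hV hk)
    · exact hancU V η η' fun k hk => hag k (by rintro rfl; exact hV hk)

end CausalModel

theorem Relation.ReflTransGen.transGen_of_ne {α : Type*} {r : α → α → Prop} {a b : α}
    (h : ReflTransGen r a b) (hab : a ≠ b) : TransGen r a b :=
  (reflTransGen_iff_eq_or_transGen.mp h).resolve_left hab.symm

/-- `V` is a non-descendant of `W` in the graph whose local Markov property holds at `W`: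
the union graph, or, when `W` is not a union-ancestor of `R`, also the descriptive graph. -/
def Nondescendant {ι : Type*} (PaU PaD : ι → Set ι) (R W V : ι) : Prop :=
  ¬ ReflTransGen (· ∈ PaU ·) W V ∨
    (¬ ReflTransGen (· ∈ PaU ·) W R ∧ ¬ ReflTransGen (· ∈ PaD ·) W V)

theorem nondescendant_or_nondescendant_of_ne {ι : Type*} {PaU PaD : ι → Set ι} {R X Y : ι}
    (hXY : X ≠ Y) (hacycD : ∀ i, ¬ TransGen (· ∈ PaD ·) i i)
    (hacycU : ∀ i, ReflTransGen (· ∈ PaU ·) i R → ¬ TransGen (· ∈ PaU ·) i i) :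
    Nondescendant PaU PaD R X Y ∨ Nondescendant PaU PaD R Y X := by
  by_contra h
  simp only [Nondescendant, not_or, not_and_or, not_not] at h
  obtain ⟨⟨hUXY, hXR | hDXY⟩, hUYX, hY⟩ := h
  · exact hacycU X hXR ((hUXY.transGen_of_ne hXY).trans (hUYX.transGen_of_ne hXY.symm))
  rcases hY with hYR | hDYX
  · exact hacycU Y hYR ((hUYX.transGen_of_ne hXY.symm).trans (hUXY.transGen_of_ne hXY))
  · exact hacycD X ((hDXY.transGen_of_ne hXY).trans (hDYX.transGen_of_ne hXY.symm))

theorem stmt_14_general {ι : Type*} [Fintype ι] [DecidableEq ι]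
    (Val : ι → Type*) (Noise : ι → Type*) [∀ j, Fintype (Noise j)]
    (p : ∀ j, Noise j → ℝ)
    (hsump : ∀ j : ι, ∑ n, p j n = 1)
    (P : (∀ j, Noise j) → ℝ)
    (hP : ∀ η : ∀ j, Noise j, P η = ∏ j, p j (η j))  -- causal sufficiency
    (R : ι) (r : Val R)
    (PaU PaD : ι → Set ι)  -- union parents, descriptive parents for regime r
    (f : ∀ i : ι, (∀ j, Val j) → Noise i → Val i)
    (F : ∀ i : ι, (∀ j, Noise j) → Val i)
    (hfix : ∀ (i : ι) (η : ∀ j, Noise j), F i η = f i (fun j => F j η) (η i))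
    (hpaU : ∀ (i : ι) (v v' : ∀ j, Val j) (n : Noise i),
      (∀ j ∈ PaU i, v j = v' j) → f i v n = f i v' n)
    (hancU : ∀ (i : ι) (η η' : ∀ j, Noise j),
      (∀ j : ι, Relation.ReflTransGen (fun a b => a ∈ PaU b) j i → η j = η' j) →
      F i η = F i η')
    (hancD : ∀ (i : ι) (η η' : ∀ j, Noise j), F R η = r → F R η' = r →
      (∀ j : ι, Relation.ReflTransGen (fun a b => a ∈ PaD b) j i → η j = η' j) →
      F i η = F i η')
    (hlocD : ∀ i : ι, i ≠ R → ∀ (η η' : ∀ j, Noise j), F R η = r → F R η' = r →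
      (∀ j ∈ PaD i, F j η = F j η') → η i = η' i → F i η = F i η')
    -- strong regime-acyclicity:
    (hacycD : ∀ i : ι, ¬ Relation.TransGen (fun a b => a ∈ PaD b) i i)
    (hacycU : ∀ i : ι, Relation.ReflTransGen (fun a b => a ∈ PaU b) i R →
      ¬ Relation.TransGen (fun a b => a ∈ PaU b) i i)
    (X Y : ι) (hXY : X ≠ Y) :
    ∃ Zs : Set ι,
      (Zs ⊆ {j | identEdge PaU PaD R j X ∨ identEdge PaU PaD R X j} ∨
       Zs ⊆ {j | identEdge PaU PaD R j Y ∨ identEdge PaU PaD R Y j}) ∧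
      (ciGiven P F X Y Zs Set.univ ∨
       (R ∉ Zs ∧ ciGiven P F X Y Zs {η | F R η = r})) := by
  have hsep : ∀ W V, Nondescendant PaU PaD R W V → ∃ Zs : Set ι,
      Zs ⊆ {j | identEdge PaU PaD R j W ∨ identEdge PaU PaD R W j} ∧
      (ciGiven P F W V Zs Set.univ ∨ (R ∉ Zs ∧ ciGiven P F W V Zs {η | F R η = r})) := by
    intro W V hWV
    by_cases hWR : ReflTransGen (· ∈ PaU ·) W R
    · refine ⟨PaU W, fun j hj => .inl (.inr ⟨hj, hWR.head hj, hWR⟩), .inl ?_⟩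
      exact ciGiven_localMarkov_union p hsump hP f hfix hpaU hancU (hacycU W hWR)
        (hWV.resolve_right fun h => h.1 hWR)
    · refine ⟨PaD W \ {R}, fun j hj => .inl (.inl hj.1), .inr ⟨fun h => h.2 rfl, ?_⟩⟩
      exact ciGiven_localMarkov_regime p hsump hP hancU hancD hlocD (hacycD W) hWR
        (hWV.symm.imp_left And.right)
  rcases nondescendant_or_nondescendant_of_ne hXY hacycD hacycU with h | h
  · obtain ⟨Zs, hZs, hci⟩ := hsep X Y h
    exact ⟨Zs, .inl hZs, hci⟩
  · obtain ⟨Zs, hZs, hci⟩ := hsep Y X h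
    exact ⟨Zs, .inr hZs, hci.imp ciGiven_comm (And.imp_right ciGiven_comm)⟩

/-- under the assumptions of the context-specific Markov property, if
`X` and `Y` (both `≠ R`) are non-adjacent in `G_ident(r)`, then there exists a
separating set `Z` contained in the `G_ident(r)`-adjacencies of `X` or of `Y` with
either `X ⫫ Y | Z`, or `X ⫫ Y | Z, R = r` and `R ∉ Z`. -/
theorem stmt_14 {ι : Type*} [Fintype ι] [DecidableEq ι]
    (Val : ι → Type*) (Noise : ι → Type*) [∀ j, Fintype (Noise j)]
    (p : ∀ j, Noise j → ℝ)
    (hpos : ∀ (j : ι) (n : Noise j), 0 ≤ p j n) (hsump : ∀ j : ι, ∑ n, p j n = 1)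
    (P : (∀ j, Noise j) → ℝ)
    (hP : ∀ η : ∀ j, Noise j, P η = ∏ j, p j (η j))  -- causal sufficiency
    (R : ι) (r : Val R)
    (PaU PaD : ι → Set ι)  -- union parents, descriptive parents for regime r
    (f : ∀ i : ι, (∀ j, Val j) → Noise i → Val i)
    (F : ∀ i : ι, (∀ j, Noise j) → Val i)
    (hfix : ∀ (i : ι) (η : ∀ j, Noise j), F i η = f i (fun j => F j η) (η i))
    (hpaU : ∀ (i : ι) (v v' : ∀ j, Val j) (n : Noise i),
      (∀ j ∈ PaU i, v j = v' j) → f i v n = f i v' n)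
    (hancU : ∀ (i : ι) (η η' : ∀ j, Noise j),
      (∀ j : ι, Relation.ReflTransGen (fun a b => a ∈ PaU b) j i → η j = η' j) →
      F i η = F i η')
    (hancD : ∀ (i : ι) (η η' : ∀ j, Noise j), F R η = r → F R η' = r →
      (∀ j : ι, Relation.ReflTransGen (fun a b => a ∈ PaD b) j i → η j = η' j) →
      F i η = F i η')
    (hlocD : ∀ i : ι, i ≠ R → ∀ (η η' : ∀ j, Noise j), F R η = r → F R η' = r →
      (∀ j ∈ PaD i, F j η = F j η') → η i = η' i → F i η = F i η')
    -- strong regime-acyclicity: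
    (hacycD : ∀ i : ι, ¬ Relation.TransGen (fun a b => a ∈ PaD b) i i)
    (hacycU : ∀ i : ι, Relation.ReflTransGen (fun a b => a ∈ PaU b) i R →
      ¬ Relation.TransGen (fun a b => a ∈ PaU b) i i)
    (X Y : ι) (hXR : X ≠ R) (hYR : Y ≠ R) (hXY : X ≠ Y)
    (hnonadj : ¬ identEdge PaU PaD R X Y ∧ ¬ identEdge PaU PaD R Y X) :
    ∃ Zs : Set ι,
      (Zs ⊆ {j | identEdge PaU PaD R j X ∨ identEdge PaU PaD R X j} ∨
       Zs ⊆ {j | identEdge PaU PaD R j Y ∨ identEdge PaU PaD R Y j}) ∧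
      (ciGiven P F X Y Zs Set.univ ∨
       (R ∉ Zs ∧ ciGiven P F X Y Zs {η | F R η = r})) :=
  stmt_14_general Val Noise p hsump P hP R r PaU PaD f F hfix hpaU hancU hancD hlocD hacycD hacycU X
    Y hXY
end
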